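/- arXiv:1211.3043 — 12 statements merged into one kernel-verified Lean document; each statement's English description precedes it below -/
import Mathlib

section
/- Let V be a real vector space, T ⊆ V a nonempty set, and A : T → (V → ℝ) an affine score. Then A is truthful if and only if there exist a convex function G : convexHull(T) → ℝ and a selection of subgradients {d_t}_{t∈T} of G on T such that A(t')(t) = G(t') + d_{t'}(t − t') for all t, t' ∈ T. -/
/-!
Truthfulness says that, at each type `t`, the affine functions `A t'` are maximised over reports
`t' ∈ T` by `t' = t`. Hence `G x := sup_{t' ∈ T} A t' x` is finite on `convexHull T` (a finite
upper bound on `T` propagates to the hull because each `A t'` is affine), convex as a supremum of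
affine functions, and equal to `A t t` on `T`. Each `A t` is then an affine minorant of `G` touching
it at `t`, so its linear part is a subgradient of `G` at `t`. Conversely, the subgradient
inequality at `t'`, evaluated at `t`, is exactly truthfulness.
-/

open Set

def IsSubgradientAt {V : Type*} [AddCommGroup V] [Module ℝ V]
    (G : V → ℝ) (C : Set V) (d : V →ₗ[ℝ] ℝ) (t : V) : Prop :=
  ∀ x ∈ C, G t + d (x - t) ≤ G x

section PointwiseSupremum

variable {V ι : Type*} [AddCommGroup V] [Module ℝ V] {f : ι → V → ℝ} {s : Set ι}

theorem convex_setOf_bddAbove_image (hf : ∀ i ∈ s, ConvexOn ℝ univ (f i)) :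
    Convex ℝ {x | BddAbove ((fun i => f i x) '' s)} := by
  rintro x ⟨Mx, hMx⟩ y ⟨My, hMy⟩ a b ha hb hab
  refine ⟨a * Mx + b * My, ?_⟩
  rintro _ ⟨i, hi, rfl⟩
  calc f i (a • x + b • y) ≤ a * f i x + b * f i y := (hf i hi).2 trivial trivial ha hb hab
    _ ≤ a * Mx + b * My := by
      gcongr
      · exact hMx (mem_image_of_mem _ hi)
      · exact hMy (mem_image_of_mem _ hi)

theorem bddAbove_image_of_mem_convexHull {S : Set V} (hf : ∀ i ∈ s, ConvexOn ℝ univ (f i))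
    (hS : ∀ x ∈ S, BddAbove ((fun i => f i x) '' s)) {x : V} (hx : x ∈ convexHull ℝ S) :
    BddAbove ((fun i => f i x) '' s) :=
  convexHull_min hS (convex_setOf_bddAbove_image hf) hx

theorem convexOn_csSup_image {C : Set V} (hC : Convex ℝ C) (hf : ∀ i ∈ s, ConvexOn ℝ C (f i))
    (hbdd : ∀ x ∈ C, BddAbove ((fun i => f i x) '' s)) :
    ConvexOn ℝ C fun x => sSup ((fun i => f i x) '' s) := by
  rcases s.eq_empty_or_nonempty with rfl | hs
  · simpa using convexOn_const 0 hC
  refine ⟨hC, fun x hx y hy a b ha hb hab => csSup_le (hs.image _) ?_⟩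
  rintro _ ⟨i, hi, rfl⟩
  have hle : ∀ z ∈ C, f i z ≤ sSup ((fun i => f i z) '' s) := fun z hz =>
    le_csSup (hbdd z hz) (mem_image_of_mem _ hi)
  calc f i (a • x + b • y) ≤ a • f i x + b • f i y := (hf i hi).2 hx hy ha hb hab
    _ ≤ _ := by gcongr <;> exact hle _ ‹_›

end PointwiseSupremum

section AffineScore

variable {V : Type*} [AddCommGroup V] [Module ℝ V]

theorem convexOn_univ_of_eq_linear_add_const {f : V → ℝ} {ℓ : V →ₗ[ℝ] ℝ} {c : ℝ}
    (h : ∀ x, f x = ℓ x + c) : ConvexOn ℝ univ f := by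
  rw [funext h]
  exact (ℓ.convexOn convex_univ).add_const c

theorem apply_eq_apply_add_linear_sub {f : V → ℝ} {ℓ : V →ₗ[ℝ] ℝ} {c : ℝ}
    (h : ∀ x, f x = ℓ x + c) (x y : V) : f y = f x + ℓ (y - x) := by
  rw [h, h, map_sub]
  ring

variable {T : Set V} {A : V → V → ℝ}

theorem truthful_of_eq_add_subgradient {G : V → ℝ} {d : V → V →ₗ[ℝ] ℝ}
    (hsub : ∀ t ∈ T, IsSubgradientAt G (convexHull ℝ T) (d t) t)
    (hrep : ∀ t ∈ T, ∀ t' ∈ T, A t' t = G t' + d t' (t - t')) :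
    ∀ t ∈ T, ∀ t' ∈ T, A t' t ≤ A t t := by
  intro t ht t' ht'
  calc A t' t = G t' + d t' (t - t') := hrep t ht t' ht'
    _ ≤ G t := hsub t' ht' t (subset_convexHull ℝ T ht)
    _ = A t t := by simp [hrep t ht t ht]

theorem exists_eq_add_subgradient_of_truthful
    (hA : ∀ t' ∈ T, ∃ (ℓ : V →ₗ[ℝ] ℝ) (c : ℝ), ∀ x, A t' x = ℓ x + c)
    (htruth : ∀ t ∈ T, ∀ t' ∈ T, A t' t ≤ A t t) :
    ∃ (G : V → ℝ) (d : V → (V →ₗ[ℝ] ℝ)),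
      ConvexOn ℝ (convexHull ℝ T) G ∧
      (∀ t ∈ T, IsSubgradientAt G (convexHull ℝ T) (d t) t) ∧
      (∀ t ∈ T, ∀ t' ∈ T, A t' t = G t' + d t' (t - t')) := by
  choose! ℓ c hℓ using hA
  have hshift : ∀ t' ∈ T, ∀ x, A t' x = A t' t' + ℓ t' (x - t') := fun t' ht' =>
    apply_eq_apply_add_linear_sub (hℓ t' ht') t'
  have hAconv : ∀ t' ∈ T, ConvexOn ℝ univ (A t') := fun t' ht' =>
    convexOn_univ_of_eq_linear_add_const (hℓ t' ht')
  set G : V → ℝ := fun x => sSup ((fun t' => A t' x) '' T)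
  have hbdd : ∀ x ∈ convexHull ℝ T, BddAbove ((fun t' => A t' x) '' T) := fun x =>
    bddAbove_image_of_mem_convexHull hAconv fun t ht =>
      ⟨A t t, by rintro _ ⟨t', ht', rfl⟩; exact htruth t ht t' ht'⟩
  have hle : ∀ x ∈ convexHull ℝ T, ∀ t' ∈ T, A t' x ≤ G x := fun x hx t' ht' =>
    le_csSup (hbdd x hx) (mem_image_of_mem _ ht')
  have hGt : ∀ t ∈ T, G t = A t t := fun t ht =>
    le_antisymm
      (csSup_le ⟨_, mem_image_of_mem _ ht⟩ (by rintro _ ⟨t', ht', rfl⟩; exact htruth t ht t' ht'))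
      (hle t (subset_convexHull ℝ T ht) t ht)
  refine ⟨G, ℓ, ?_, fun t ht x hx => ?_, fun t ht t' ht' => ?_⟩
  · exact convexOn_csSup_image (convex_convexHull ℝ T)
      (fun t' ht' => (hAconv t' ht').subset (subset_univ _) (convex_convexHull ℝ T)) hbdd
  · rw [hGt t ht, ← hshift t ht x]
    exact hle x hx t ht
  · rw [hGt t' ht', ← hshift t' ht' t]

end AffineScore

theorem affine_score_characterization_general {V : Type*} [AddCommGroup V] [Module ℝ V]
    (T : Set V) (A : V → V → ℝ)
    (hA : ∀ t' ∈ T, ∃ (ℓ : V →ₗ[ℝ] ℝ) (c : ℝ), ∀ x, A t' x = ℓ x + c) :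
    (∀ t ∈ T, ∀ t' ∈ T, A t' t ≤ A t t) ↔
    ∃ (G : V → ℝ) (d : V → (V →ₗ[ℝ] ℝ)),
      ConvexOn ℝ (convexHull ℝ T) G ∧
      (∀ t ∈ T, IsSubgradientAt G (convexHull ℝ T) (d t) t) ∧
      (∀ t ∈ T, ∀ t' ∈ T, A t' t = G t' + d t' (t - t')) :=
  ⟨exists_eq_add_subgradient_of_truthful hA, fun ⟨_, _, _, hsub, hrep⟩ =>
    truthful_of_eq_add_subgradient hsub hrep⟩

/-- An affine score `A` on a nonempty type space `T` is truthful iff it is of the form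
`A(t')(t) = G(t') + d_{t'}(t - t')` for a convex function `G` on `convexHull T` and a
selection of subgradients `{d_t}_{t ∈ T}` of `G` on `T`. -/
theorem affine_score_characterization {V : Type*} [AddCommGroup V] [Module ℝ V]
    (T : Set V) (hT : T.Nonempty) (A : V → V → ℝ)
    (hA : ∀ t' ∈ T, ∃ (ℓ : V →ₗ[ℝ] ℝ) (c : ℝ), ∀ x, A t' x = ℓ x + c) :
    (∀ t ∈ T, ∀ t' ∈ T, A t' t ≤ A t t) ↔
    ∃ (G : V → ℝ) (d : V → (V →ₗ[ℝ] ℝ)),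
      ConvexOn ℝ (convexHull ℝ T) G ∧
      (∀ t ∈ T, IsSubgradientAt G (convexHull ℝ T) (d t) t) ∧
      (∀ t ∈ T, ∀ t' ∈ T, A t' t = G t' + d t' (t - t')) :=
  affine_score_characterization_general T A hA
end

section
/- Let Ω be a measurable space and P an arbitrary set of probability measures on Ω, regarded as a subset of the real vector space of finite signed measures on Ω, with convexHull(P) taken in that space. Let S : P → (Ω → ℝ) be a scoring rule such that for every p ∈ P the function S(p) is measurable and integrable with respect to every q ∈ P. Then S is proper (∫ S(q) dp ≤ ∫ S(p) dp for all p, q ∈ P) if and only if there exist a convex function G : convexHull(P) → ℝ and, for each p ∈ P, a measurable function G_p : Ω → ℝ integrable with respect to every measure in convexHull(P), such that (i) for every μ ∈ convexHull(P), G(μ) ≥ G(p) + ∫ G_p dμ − ∫ G_p dp (i.e. the linear functional μ ↦ ∫ G_p dμ is a subgradient of G at p), and (ii) S(p)(ω) = G(p) + G_p(ω) − ∫ G_p dp for all ω ∈ Ω. -/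
open MeasureTheory

/-- Integral of a real function against a finite signed measure, via the Jordan
decomposition. -/
noncomputable def signedIntegral {Ω : Type*} [MeasurableSpace Ω]
    (μ : SignedMeasure Ω) (f : Ω → ℝ) : ℝ :=
  (∫ x, f x ∂μ.toJordanDecomposition.posPart) -
    ∫ x, f x ∂μ.toJordanDecomposition.negPart

/-- Integrability of a real function with respect to a finite signed measure. -/
def SignedIntegrable {Ω : Type*} [MeasurableSpace Ω]
    (f : Ω → ℝ) (μ : SignedMeasure Ω) : Prop :=
  Integrable f μ.toJordanDecomposition.posPart ∧
    Integrable f μ.toJordanDecomposition.negPart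

/-! If `S` is proper, take `G(μ) = sup_{q ∈ P} ∫ S(q) dμ` and `G_p = S(p)`. On the convex hull
each `μ ↦ ∫ S(q) dμ` is affine and, by properness, bounded above by the corresponding convex
combination of the values `∫ S(p) dp`; so `G` is a real-valued supremum of affine maps, hence
convex. Properness says the supremum at `p` is attained at `q = p`, and then `∫ S(p) dμ ≤ G(μ)`
is the subgradient inequality. Conversely, integrating the representation of `S(q)` against `p`
turns the subgradient inequality at `μ = p` into `∫ S(q) dp ≤ ∫ S(p) dp`. -/

section SupOfConvex

variable {E ι : Type*} [AddCommGroup E] [Module ℝ E] {s : Set E} {I : Set ι} {F : ι → E → ℝ}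

theorem convex_setOf_bddAbove_image_s1 (hs : Convex ℝ s) (hF : ∀ i ∈ I, ConvexOn ℝ s (F i)) :
    Convex ℝ {x ∈ s | BddAbove ((F · x) '' I)} := by
  rintro x ⟨hx, Bx, hBx⟩ y ⟨hy, By, hBy⟩ a b ha hb hab
  refine ⟨hs hx hy ha hb hab, a * Bx + b * By, ?_⟩
  rintro _ ⟨i, hi, rfl⟩
  calc F i (a • x + b • y) ≤ a • F i x + b • F i y := (hF i hi).2 hx hy ha hb hab
    _ ≤ a * Bx + b * By := by
      simp only [smul_eq_mul]
      gcongr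
      exacts [hBx ⟨i, hi, rfl⟩, hBy ⟨i, hi, rfl⟩]

theorem convexOn_sSup_image (hs : Convex ℝ s) (hF : ∀ i ∈ I, ConvexOn ℝ s (F i))
    (hbdd : ∀ x ∈ s, BddAbove ((F · x) '' I)) :
    ConvexOn ℝ s (fun x => sSup ((F · x) '' I)) := by
  rcases I.eq_empty_or_nonempty with rfl | hI
  · simpa using convexOn_const (sSup (∅ : Set ℝ)) hs
  refine ⟨hs, fun x hx y hy a b ha hb hab => csSup_le (hI.image _) ?_⟩
  rintro _ ⟨i, hi, rfl⟩
  calc F i (a • x + b • y) ≤ a • F i x + b • F i y := (hF i hi).2 hx hy ha hb hab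
    _ ≤ a • sSup ((F · x) '' I) + b • sSup ((F · y) '' I) := by
      simp only [smul_eq_mul]
      gcongr
      exacts [le_csSup (hbdd x hx) ⟨i, hi, rfl⟩, le_csSup (hbdd y hy) ⟨i, hi, rfl⟩]

end SupOfConvex

namespace MeasureTheory

variable {Ω : Type*} [MeasurableSpace Ω]

theorem Measure.toJordanDecomposition_toSignedMeasure (ν : Measure Ω) [IsFiniteMeasure ν] :
    ν.toSignedMeasure.toJordanDecomposition = ⟨ν, 0, .zero_right⟩ :=
  SignedMeasure.toJordanDecomposition_eq (by simp [JordanDecomposition.toSignedMeasure])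

theorem signedIntegral_toSignedMeasure (ν : Measure Ω) [IsFiniteMeasure ν] (f : Ω → ℝ) :
    signedIntegral ν.toSignedMeasure f = ∫ ω, f ω ∂ν := by
  simp [signedIntegral, Measure.toJordanDecomposition_toSignedMeasure]

theorem signedIntegrable_toSignedMeasure_iff {ν : Measure Ω} [IsFiniteMeasure ν] {f : Ω → ℝ} :
    SignedIntegrable f ν.toSignedMeasure ↔ Integrable f ν := by
  simp [SignedIntegrable, Measure.toJordanDecomposition_toSignedMeasure]

theorem smul_add_smul_toSignedMeasure {a b : ℝ} (ha : 0 ≤ a) (hb : 0 ≤ b)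
    (ν₁ ν₂ : Measure Ω) [IsFiniteMeasure ν₁] [IsFiniteMeasure ν₂] :
    a • ν₁.toSignedMeasure + b • ν₂.toSignedMeasure
      = (a.toNNReal • ν₁ + b.toNNReal • ν₂).toSignedMeasure := by
  ext i hi
  simp [Measure.toSignedMeasure_apply_measurable hi, NNReal.smul_def, ha, hb]

theorem integral_toNNReal_smul_add_smul_measure {a b : ℝ} (ha : 0 ≤ a) (hb : 0 ≤ b)
    {ν₁ ν₂ : Measure Ω} {f : Ω → ℝ} (h₁ : Integrable f ν₁) (h₂ : Integrable f ν₂) :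
    ∫ ω, f ω ∂(a.toNNReal • ν₁ + b.toNNReal • ν₂) = a * ∫ ω, f ω ∂ν₁ + b * ∫ ω, f ω ∂ν₂ := by
  have h₁' : Integrable f (a.toNNReal • ν₁) := h₁.smul_measure ENNReal.coe_ne_top
  have h₂' : Integrable f (b.toNNReal • ν₂) := h₂.smul_measure ENNReal.coe_ne_top
  rw [integral_add_measure h₁' h₂', integral_smul_nnreal_measure, integral_smul_nnreal_measure]
  simp [NNReal.smul_def, ha, hb]

/-- The Jordan decomposition is not additive, so `signedIntegral` is linear only on signed
measures that come from positive measures. -/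
def integrableSignedMeasures (F : Set (Ω → ℝ)) : Set (SignedMeasure Ω) :=
  {μ | ∃ (ν : Measure Ω) (_ : IsFiniteMeasure ν), μ = ν.toSignedMeasure ∧ ∀ f ∈ F, Integrable f ν}

variable {F : Set (Ω → ℝ)}

theorem toSignedMeasure_mem_integrableSignedMeasures {ν : Measure Ω} [IsFiniteMeasure ν]
    (h : ∀ f ∈ F, Integrable f ν) : ν.toSignedMeasure ∈ integrableSignedMeasures F :=
  ⟨ν, inferInstance, rfl, h⟩

theorem convex_integrableSignedMeasures : Convex ℝ (integrableSignedMeasures F) := by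
  rintro _ ⟨ν₁, _, rfl, h₁⟩ _ ⟨ν₂, _, rfl, h₂⟩ a b ha hb -
  rw [smul_add_smul_toSignedMeasure ha hb]
  exact toSignedMeasure_mem_integrableSignedMeasures fun f hf =>
    ((h₁ f hf).smul_measure ENNReal.coe_ne_top).add_measure
      ((h₂ f hf).smul_measure ENNReal.coe_ne_top)

theorem signedIntegrable_of_mem_integrableSignedMeasures {μ : SignedMeasure Ω}
    (hμ : μ ∈ integrableSignedMeasures F) {f : Ω → ℝ} (hf : f ∈ F) : SignedIntegrable f μ := by
  obtain ⟨ν, _, rfl, hν⟩ := hμ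
  exact signedIntegrable_toSignedMeasure_iff.2 (hν f hf)

theorem convexOn_signedIntegral {f : Ω → ℝ} (hf : f ∈ F) :
    ConvexOn ℝ (integrableSignedMeasures F) (signedIntegral · f) := by
  refine ⟨convex_integrableSignedMeasures, ?_⟩
  rintro _ ⟨ν₁, _, rfl, h₁⟩ _ ⟨ν₂, _, rfl, h₂⟩ a b ha hb -
  simp only [smul_add_smul_toSignedMeasure ha hb, signedIntegral_toSignedMeasure,
    integral_toNNReal_smul_add_smul_measure ha hb (h₁ f hf) (h₂ f hf), smul_eq_mul, le_refl]

variable {P : Set (ProbabilityMeasure Ω)} {S : ProbabilityMeasure Ω → Ω → ℝ}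

def IsProperScoringRule (P : Set (ProbabilityMeasure Ω)) (S : ProbabilityMeasure Ω → Ω → ℝ) :
    Prop :=
  ∀ p ∈ P, ∀ q ∈ P, ∫ ω, S q ω ∂(p : Measure Ω) ≤ ∫ ω, S p ω ∂(p : Measure Ω)

/-- The generalized entropy `G` of the paper. -/
noncomputable def scoreEnvelope (P : Set (ProbabilityMeasure Ω))
    (S : ProbabilityMeasure Ω → Ω → ℝ) (μ : SignedMeasure Ω) : ℝ :=
  sSup ((fun p => signedIntegral μ (S p)) '' P)

theorem scoreEnvelope_toSignedMeasure (hS : IsProperScoringRule P S) {p : ProbabilityMeasure Ω}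
    (hp : p ∈ P) :
    scoreEnvelope P S (p : Measure Ω).toSignedMeasure = ∫ ω, S p ω ∂(p : Measure Ω) := by
  refine IsGreatest.csSup_eq ⟨⟨p, hp, signedIntegral_toSignedMeasure _ _⟩, ?_⟩
  rintro _ ⟨q, hq, rfl⟩
  simpa only [signedIntegral_toSignedMeasure] using hS p hp q hq

theorem convexHull_subset_setOf_bddAbove (hS : IsProperScoringRule P S)
    (hSint : ∀ p ∈ P, ∀ q ∈ P, Integrable (S p) (q : Measure Ω)) :
    convexHull ℝ ((fun p : ProbabilityMeasure Ω => (p : Measure Ω).toSignedMeasure) '' P) ⊆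
      {μ ∈ integrableSignedMeasures (S '' P) |
        BddAbove ((fun p => signedIntegral μ (S p)) '' P)} := by
  refine convexHull_min ?_ (convex_setOf_bddAbove_image_s1 convex_integrableSignedMeasures
    fun p hp => convexOn_signedIntegral (Set.mem_image_of_mem S hp))
  rintro _ ⟨p, hp, rfl⟩
  refine ⟨toSignedMeasure_mem_integrableSignedMeasures ?_, ∫ ω, S p ω ∂(p : Measure Ω), ?_⟩
  · rintro _ ⟨q, hq, rfl⟩
    exact hSint q hq p hp
  · rintro _ ⟨q, hq, rfl⟩
    simpa only [signedIntegral_toSignedMeasure] using hS p hp q hq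

theorem convexOn_scoreEnvelope (hS : IsProperScoringRule P S)
    (hSint : ∀ p ∈ P, ∀ q ∈ P, Integrable (S p) (q : Measure Ω)) :
    ConvexOn ℝ
      (convexHull ℝ ((fun p : ProbabilityMeasure Ω => (p : Measure Ω).toSignedMeasure) '' P))
      (scoreEnvelope P S) :=
  have hhull := convexHull_subset_setOf_bddAbove hS hSint
  convexOn_sSup_image (convex_convexHull ℝ _)
    (fun _ hp => (convexOn_signedIntegral (Set.mem_image_of_mem S hp)).subset
      (hhull.trans (Set.sep_subset _ _)) (convex_convexHull ℝ _))
    (fun _ hμ => (hhull hμ).2)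

theorem IsProperScoringRule.of_subgradient {G : SignedMeasure Ω → ℝ}
    {Gsub : ProbabilityMeasure Ω → Ω → ℝ}
    (hint : ∀ p ∈ P, ∀ q ∈ P, Integrable (Gsub q) (p : Measure Ω))
    (hsub : ∀ p ∈ P, ∀ q ∈ P, G (q : Measure Ω).toSignedMeasure + ∫ ω, Gsub q ω ∂(p : Measure Ω)
      - ∫ ω, Gsub q ω ∂(q : Measure Ω) ≤ G (p : Measure Ω).toSignedMeasure)
    (hrep : ∀ p ∈ P, ∀ ω, S p ω = G (p : Measure Ω).toSignedMeasure + Gsub p ω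
      - ∫ ω', Gsub p ω' ∂(p : Measure Ω)) :
    IsProperScoringRule P S := by
  intro p hp q hq
  have hscore : ∀ r ∈ P, ∫ ω, S r ω ∂(p : Measure Ω) = G (r : Measure Ω).toSignedMeasure
      + ∫ ω, Gsub r ω ∂(p : Measure Ω) - ∫ ω, Gsub r ω ∂(r : Measure Ω) := by
    intro r hr
    have hGsub := hint p hp r hr
    simp_rw [hrep r hr]
    rw [integral_sub (by fun_prop) (integrable_const _), integral_add (integrable_const _) hGsub]
    simp
  rw [hscore q hq, hscore p hp, add_sub_cancel_right]
  exact hsub p hp q hq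

end MeasureTheory

theorem proper_scoring_rule_characterization_general {Ω : Type*} [MeasurableSpace Ω]
    (P : Set (ProbabilityMeasure Ω))
    (S : ProbabilityMeasure Ω → Ω → ℝ)
    (hSmeas : ∀ p ∈ P, Measurable (S p))
    (hSint : ∀ p ∈ P, ∀ q ∈ P, Integrable (S p) (q : Measure Ω)) :
    (∀ p ∈ P, ∀ q ∈ P, (∫ ω, S q ω ∂(p : Measure Ω)) ≤ ∫ ω, S p ω ∂(p : Measure Ω)) ↔
    ∃ (G : SignedMeasure Ω → ℝ) (Gsub : ProbabilityMeasure Ω → Ω → ℝ),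
      ConvexOn ℝ
        (convexHull ℝ ((fun p : ProbabilityMeasure Ω => (p : Measure Ω).toSignedMeasure) '' P))
        G ∧
      (∀ p ∈ P, Measurable (Gsub p)) ∧
      (∀ p ∈ P, ∀ μ ∈
          convexHull ℝ ((fun p : ProbabilityMeasure Ω => (p : Measure Ω).toSignedMeasure) '' P),
        SignedIntegrable (Gsub p) μ) ∧
      (∀ p ∈ P, ∀ μ ∈
          convexHull ℝ ((fun p : ProbabilityMeasure Ω => (p : Measure Ω).toSignedMeasure) '' P),
        G ((p : Measure Ω).toSignedMeasure) + signedIntegral μ (Gsub p)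
            - ∫ ω, Gsub p ω ∂(p : Measure Ω) ≤ G μ) ∧
      (∀ p ∈ P, ∀ ω : Ω,
        S p ω = G ((p : Measure Ω).toSignedMeasure) + Gsub p ω
            - ∫ ω', Gsub p ω' ∂(p : Measure Ω)) := by
  have hmem : ∀ p ∈ P, (p : Measure Ω).toSignedMeasure ∈
      convexHull ℝ ((fun p : ProbabilityMeasure Ω => (p : Measure Ω).toSignedMeasure) '' P) :=
    fun p hp => subset_convexHull ℝ _ ⟨p, hp, rfl⟩
  constructor
  · intro hS
    have hhull := convexHull_subset_setOf_bddAbove hS hSint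
    refine ⟨scoreEnvelope P S, S, convexOn_scoreEnvelope hS hSint, hSmeas,
      fun p hp μ hμ => signedIntegrable_of_mem_integrableSignedMeasures (hhull hμ).1 ⟨p, hp, rfl⟩,
      fun p hp μ hμ => ?_, fun p hp ω => ?_⟩
    · rw [scoreEnvelope_toSignedMeasure hS hp, add_sub_cancel_left]
      exact le_csSup (hhull hμ).2 ⟨p, hp, rfl⟩
    · rw [scoreEnvelope_toSignedMeasure hS hp, add_sub_cancel_left]
  · rintro ⟨G, Gsub, -, -, hint, hsub, hrep⟩
    refine IsProperScoringRule.of_subgradient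
      (fun p hp q hq => signedIntegrable_toSignedMeasure_iff.1 (hint q hq _ (hmem p hp)))
      (fun p hp q hq => ?_) hrep
    simpa only [signedIntegral_toSignedMeasure] using hsub q hq _ (hmem p hp)

/-- Characterization of proper scoring rules on an arbitrary (possibly non-convex) set
of probability measures `P`, with convex combinations taken in the space of finite
signed measures. -/
theorem proper_scoring_rule_characterization {Ω : Type*} [MeasurableSpace Ω]
    (P : Set (ProbabilityMeasure Ω)) (hP : P.Nonempty)
    (S : ProbabilityMeasure Ω → Ω → ℝ)
    (hSmeas : ∀ p ∈ P, Measurable (S p))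
    (hSint : ∀ p ∈ P, ∀ q ∈ P, Integrable (S p) (q : Measure Ω)) :
    (∀ p ∈ P, ∀ q ∈ P, (∫ ω, S q ω ∂(p : Measure Ω)) ≤ ∫ ω, S p ω ∂(p : Measure Ω)) ↔
    ∃ (G : SignedMeasure Ω → ℝ) (Gsub : ProbabilityMeasure Ω → Ω → ℝ),
      ConvexOn ℝ
        (convexHull ℝ ((fun p : ProbabilityMeasure Ω => (p : Measure Ω).toSignedMeasure) '' P))
        G ∧
      (∀ p ∈ P, Measurable (Gsub p)) ∧
      (∀ p ∈ P, ∀ μ ∈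
          convexHull ℝ ((fun p : ProbabilityMeasure Ω => (p : Measure Ω).toSignedMeasure) '' P),
        SignedIntegrable (Gsub p) μ) ∧
      (∀ p ∈ P, ∀ μ ∈
          convexHull ℝ ((fun p : ProbabilityMeasure Ω => (p : Measure Ω).toSignedMeasure) '' P),
        G ((p : Measure Ω).toSignedMeasure) + signedIntegral μ (Gsub p)
            - ∫ ω, Gsub p ω ∂(p : Measure Ω) ≤ G μ) ∧
      (∀ p ∈ P, ∀ ω : Ω,
        S p ω = G ((p : Measure Ω).toSignedMeasure) + Gsub p ω
            - ∫ ω', Gsub p ω' ∂(p : Measure Ω)) :=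
  proper_scoring_rule_characterization_general P S hSmeas hSint
end

section
/- Let T = {t ∈ ℝ : t ≥ 0} and let f, p : T → ℝ define a single-parameter mechanism. The mechanism is truthful, i.e. t·f(t') − p(t') ≤ t·f(t) − p(t) for all t, t' ≥ 0, if and only if (i) f is monotone non-decreasing on T, and (ii) p(t) = t·f(t) − ∫₀ᵗ f(s) ds + p(0) for every t ≥ 0 (the integral exists since f is monotone). -/
/-!
Writing `U t = t * f t - p t` for the utility of truthful reporting, truthfulness says exactly
that `f t'` is a subgradient of `U` at every `t'`. Such a subgradient is monotone, `U` is
Lipschitz on compact intervals, and `U` is differentiable with derivative `f` wherever `f` is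
continuous, i.e. off a countable set; the fundamental theorem of calculus then gives
`U t - U 0 = ∫₀ᵗ f`, which is the payment identity. Conversely, for monotone `f` the integral
`∫₀ᵗ f` has subgradient `f`.
-/

open Set Filter Topology MeasureTheory

def HasSubgradientOn (g f : ℝ → ℝ) (s : Set ℝ) : Prop :=
  ∀ a ∈ s, ∀ b ∈ s, g a + f a * (b - a) ≤ g b

namespace HasSubgradientOn

variable {g f : ℝ → ℝ} {s : Set ℝ}

theorem mono {t : Set ℝ} (h : HasSubgradientOn g f s) (hts : t ⊆ s) : HasSubgradientOn g f t :=
  fun a ha b hb => h a (hts ha) b (hts hb)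

theorem slope_mem_Icc (h : HasSubgradientOn g f s) {a b : ℝ} (ha : a ∈ s) (hb : b ∈ s)
    (hab : a < b) : slope g a b ∈ Icc (f a) (f b) := by
  have hba : 0 < b - a := sub_pos.2 hab
  rw [slope_def_field]
  constructor
  · rw [le_div_iff₀ hba]
    linarith [h a ha b hb]
  · rw [div_le_iff₀ hba]
    linarith [h b hb a ha]

theorem monotoneOn (h : HasSubgradientOn g f s) : MonotoneOn f s := by
  intro a ha b hb hab
  rcases hab.lt_or_eq with hab | rfl
  · exact (h.slope_mem_Icc ha hb hab).1.trans (h.slope_mem_Icc ha hb hab).2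
  · exact le_rfl

theorem lipschitzOnWith_Icc {a b : ℝ} (h : HasSubgradientOn g f (Icc a b)) :
    LipschitzOnWith (Real.toNNReal (max |f a| |f b|)) g (Icc a b) := by
  refine LipschitzOnWith.of_le_add_mul' _ fun x hx y hy => ?_
  have hab : a ≤ b := hx.1.trans hx.2
  have hfx : |f x| ≤ max |f a| |f b| := abs_le_max_abs_abs
    (h.monotoneOn (left_mem_Icc.2 hab) hx hx.1) (h.monotoneOn hx (right_mem_Icc.2 hab) hx.2)
  calc g x ≤ g y + f x * (x - y) := by linarith [h x hx y hy]
    _ ≤ g y + |f x| * |x - y| := by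
      rw [← abs_mul]
      exact add_le_add_right (le_abs_self _) _
    _ ≤ g y + max |f a| |f b| * dist x y := by
      rw [Real.dist_eq]
      gcongr

theorem hasDerivAt {x : ℝ} (h : HasSubgradientOn g f s) (hs : s ∈ 𝓝 x)
    (hf : ContinuousAt f x) :
    HasDerivAt g (f x) x := by
  rw [hasDerivAt_iff_tendsto_slope]
  have hmin : Tendsto (fun y => min (f x) (f y)) (𝓝[≠] x) (𝓝 (f x)) := by
    have := (tendsto_const_nhds (x := f x)).min hf.tendsto
    rw [min_self] at this
    exact this.mono_left nhdsWithin_le_nhds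
  have hmax : Tendsto (fun y => max (f x) (f y)) (𝓝[≠] x) (𝓝 (f x)) := by
    have := (tendsto_const_nhds (x := f x)).max hf.tendsto
    rw [max_self] at this
    exact this.mono_left nhdsWithin_le_nhds
  have hbounds :
      ∀ᶠ y in 𝓝[≠] x, slope g x y ∈ Icc (min (f x) (f y)) (max (f x) (f y)) := by
    filter_upwards [self_mem_nhdsWithin, mem_nhdsWithin_of_mem_nhds hs] with y hyx hy
    rcases lt_or_gt_of_ne hyx with hlt | hgt
    · rw [slope_comm]
      obtain ⟨hlo, hhi⟩ := h.slope_mem_Icc hy (mem_of_mem_nhds hs) hlt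
      exact ⟨min_le_of_right_le hlo, le_max_of_le_left hhi⟩
    · obtain ⟨hlo, hhi⟩ := h.slope_mem_Icc (mem_of_mem_nhds hs) hy hgt
      exact ⟨min_le_of_left_le hlo, le_max_of_le_right hhi⟩
  exact tendsto_of_tendsto_of_tendsto_of_le_of_le' hmin hmax
    (hbounds.mono fun _ hy => hy.1) (hbounds.mono fun _ hy => hy.2)

theorem integral_eq_sub {a b : ℝ} (h : HasSubgradientOn g f (Icc a b)) (hab : a ≤ b) :
    ∫ x in a..b, f x = g b - g a := by
  have hf := h.monotoneOn
  refine integral_eq_of_hasDerivAt_off_countable_of_le g f hab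
    hf.countable_not_continuousWithinAt h.lipschitzOnWith_Icc.continuousOn ?_ ?_
  · rintro x ⟨hx, hcont⟩
    have hnhds : Icc a b ∈ 𝓝 x := Icc_mem_nhds hx.1 hx.2
    have hfx : ContinuousWithinAt f (Icc a b) x := by
      by_contra hnot
      exact hcont ⟨Ioo_subset_Icc_self hx, hnot⟩
    exact h.hasDerivAt hnhds (hfx.continuousAt hnhds)
  · exact (hf.mono (uIcc_of_le hab).subset).intervalIntegrable

end HasSubgradientOn

namespace MonotoneOn

variable {f : ℝ → ℝ} {s : Set ℝ}

theorem mul_sub_le_integral (hf : MonotoneOn f s) (hs : s.OrdConnected) {a b : ℝ}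
    (ha : a ∈ s) (hb : b ∈ s) : f a * (b - a) ≤ ∫ x in a..b, f x := by
  have hint : IntervalIntegrable f volume a b := (hf.mono (hs.uIcc_subset ha hb)).intervalIntegrable
  rcases le_total a b with hab | hba
  · have := intervalIntegral.integral_mono_on hab intervalIntegrable_const hint
      fun x hx => hf ha (hs.out ha hb hx) hx.1
    simpa [mul_comm] using this
  · have := intervalIntegral.integral_mono_on hba hint.symm intervalIntegrable_const
      fun x hx => hf (hs.out hb ha hx) ha hx.2
    rw [intervalIntegral.integral_symm]
    simp only [intervalIntegral.integral_const, smul_eq_mul] at this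
    linarith

theorem hasSubgradientOn_integral (hf : MonotoneOn f s) (hs : s.OrdConnected) {c : ℝ}
    (hc : c ∈ s) : HasSubgradientOn (fun x => ∫ t in c..x, f t) f s := by
  intro a ha b hb
  dsimp only
  have hint : ∀ x ∈ s, ∀ y ∈ s, IntervalIntegrable f volume x y :=
    fun x hx y hy => (hf.mono (hs.uIcc_subset hx hy)).intervalIntegrable
  rw [← intervalIntegral.integral_add_adjacent_intervals (hint c hc a ha) (hint a ha b hb)]
  linarith [hf.mul_sub_le_integral hs ha hb]

end MonotoneOn

/-- Myerson's characterization for single-parameter mechanisms: a mechanism `(f, p)` on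
the type space `[0, ∞)` with valuation `t ⬝ f(t')` is truthful iff the allocation rule
`f` is monotone non-decreasing and the payment satisfies the Myerson payment identity. -/
theorem myerson_single_parameter (f p : ℝ → ℝ) :
    (∀ t, 0 ≤ t → ∀ t', 0 ≤ t' → t * f t' - p t' ≤ t * f t - p t) ↔
    (MonotoneOn f (Set.Ici (0 : ℝ)) ∧
      ∀ t, 0 ≤ t → p t = t * f t - (∫ s in (0:ℝ)..t, f s) + p 0) := by
  have truthful_iff :
      (∀ t, 0 ≤ t → ∀ t', 0 ≤ t' → t * f t' - p t' ≤ t * f t - p t) ↔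
      HasSubgradientOn (fun t => t * f t - p t) f (Ici 0) :=
    ⟨fun H a ha b hb => by linear_combination H b hb a ha,
      fun H t ht t' ht' => by linear_combination H t' ht' t ht⟩
  rw [truthful_iff]
  constructor
  · intro h
    refine ⟨h.monotoneOn, fun t ht => ?_⟩
    have := (h.mono Icc_subset_Ici_self).integral_eq_sub ht
    simp only [zero_mul, zero_sub] at this
    linarith
  · rintro ⟨hmono, hpay⟩ a ha b hb
    have := hmono.hasSubgradientOn_integral ordConnected_Ici self_mem_Ici a ha b hb
    dsimp only
    rw [hpay a ha, hpay b hb]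
    linarith
end

section
/- Let O be a set of outcomes, let V = (O → ℝ) with pointwise vector-space operations, and let T ⊆ V be a nonempty set of types. Let f : T → O and p : T → ℝ define a mechanism. The mechanism is truthful, i.e. t(f(t')) − p(t') ≤ t(f(t)) − p(t) for all t, t' ∈ T, if and only if there exist a convex function G : convexHull(T) → ℝ and a selection of subgradients {d_t}_{t∈T} of G on T such that for every t ∈ T, d_t is the evaluation functional v ↦ v(f(t)) and G(t) = t(f(t)) − p(t). -/
open Set

section Convexity

variable {ι E : Type*} [AddCommGroup E] [Module ℝ E]

theorem AffineMap.convexOn (a : E →ᵃ[ℝ] ℝ) {s : Set E} (hs : Convex ℝ s) : ConvexOn ℝ s a :=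
  ((convexOn_id convex_univ).comp_affineMap a).subset (subset_univ s) hs

theorem convex_setOf_bddAbove_range {f : ι → E → ℝ} (hf : ∀ i, ConvexOn ℝ univ (f i)) :
    Convex ℝ {x | BddAbove (range fun i => f i x)} := by
  rintro x ⟨Mx, hMx⟩ y ⟨My, hMy⟩ a b ha hb hab
  refine ⟨a * Mx + b * My, forall_mem_range.2 fun i => ?_⟩
  calc f i (a • x + b • y) ≤ a • f i x + b • f i y :=
        (hf i).2 (mem_univ x) (mem_univ y) ha hb hab
    _ ≤ a * Mx + b * My := by
        simp only [smul_eq_mul]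
        gcongr
        exacts [hMx (mem_range_self i), hMy (mem_range_self i)]

theorem bddAbove_range_of_mem_convexHull {f : ι → E → ℝ} (hf : ∀ i, ConvexOn ℝ univ (f i))
    {T : Set E} (hT : ∀ t ∈ T, BddAbove (range fun i => f i t)) {x : E}
    (hx : x ∈ convexHull ℝ T) : BddAbove (range fun i => f i x) :=
  convexHull_min hT (convex_setOf_bddAbove_range hf) hx

theorem convexOn_ciSup [Nonempty ι] {f : ι → E → ℝ} {s : Set E} (hf : ∀ i, ConvexOn ℝ s (f i))
    (hs : Convex ℝ s) (hbdd : ∀ x ∈ s, BddAbove (range fun i => f i x)) :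
    ConvexOn ℝ s fun x => ⨆ i, f i x := by
  refine ⟨hs, fun x hx y hy a b ha hb hab => ciSup_le fun i => ?_⟩
  calc f i (a • x + b • y) ≤ a • f i x + b • f i y := (hf i).2 hx hy ha hb hab
    _ ≤ a • (⨆ i, f i x) + b • ⨆ i, f i y := by
        gcongr
        exacts [le_ciSup (hbdd x hx) i, le_ciSup (hbdd y hy) i]

theorem isSubgradientAt_linear_iff {G : E → ℝ} {C : Set E} {a : E →ᵃ[ℝ] ℝ} {t : E}
    (ht : G t = a t) : IsSubgradientAt G C a.linear t ↔ ∀ x ∈ C, a x ≤ G x := by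
  have hsupport : ∀ x, G t + a.linear (x - t) = a x := fun x => by
    rw [ht, ← vsub_eq_sub, a.linearMap_vsub, vsub_eq_sub, add_sub_cancel]
  simp only [IsSubgradientAt, hsupport]

end Convexity

/-- The utility of an agent of true type `x` who reports `t'`, as a function of `x`. -/
def utility {O : Type*} (f : (O → ℝ) → O) (p : (O → ℝ) → ℝ) (t' : O → ℝ) : (O → ℝ) →ᵃ[ℝ] ℝ where
  toFun x := x (f t') - p t'
  linear := LinearMap.proj (f t')
  map_vadd' x v := by
    simp only [vadd_eq_add, Pi.add_apply, LinearMap.coe_proj, Function.eval]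
    ring

/-- A direct mechanism `(f, p)` on outcome space `O` and type space `T ⊆ (O → ℝ)` is
truthful iff there is a convex function `G` on `convexHull T` and a selection of
subgradients `{d_t}` of `G` on `T` such that `d_t` is evaluation at `f t` and
`G t = t (f t) - p t` for every `t ∈ T`. -/
theorem mechanism_characterization {O : Type*}
    (T : Set (O → ℝ)) (hT : T.Nonempty) (f : (O → ℝ) → O) (p : (O → ℝ) → ℝ) :
    (∀ t ∈ T, ∀ t' ∈ T, t (f t') - p t' ≤ t (f t) - p t) ↔
    ∃ (G : (O → ℝ) → ℝ) (d : (O → ℝ) → ((O → ℝ) →ₗ[ℝ] ℝ)),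
      ConvexOn ℝ (convexHull ℝ T) G ∧
      (∀ t ∈ T, IsSubgradientAt G (convexHull ℝ T) (d t) t) ∧
      (∀ t ∈ T, d t = LinearMap.proj (f t) ∧ G t = t (f t) - p t) := by
  constructor
  · intro htruthful
    have := hT.to_subtype
    have hbdd : ∀ x ∈ convexHull ℝ T, BddAbove (range fun t' : T => utility f p t' x) :=
      fun x => bddAbove_range_of_mem_convexHull
        (fun t' : T => (utility f p t').convexOn convex_univ)
        fun t ht => ⟨utility f p t t, forall_mem_range.2 fun t' : T => htruthful t ht t' t'.2⟩
    have hmax : ∀ t ∈ T, (⨆ t' : T, utility f p t' t) = utility f p t t := fun t ht =>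
      le_antisymm (ciSup_le fun t' : T => htruthful t ht t' t'.2)
        (le_ciSup (hbdd t (subset_convexHull ℝ T ht)) ⟨t, ht⟩)
    refine ⟨fun x => ⨆ t' : T, utility f p t' x, fun t => (utility f p t).linear,
      convexOn_ciSup (fun t' => (utility f p t').convexOn (convex_convexHull ℝ T))
        (convex_convexHull ℝ T) hbdd, fun t ht => ?_, fun t ht => ⟨rfl, hmax t ht⟩⟩
    exact (isSubgradientAt_linear_iff (hmax t ht)).2 fun x hx => le_ciSup (hbdd x hx) ⟨t, ht⟩
  · rintro ⟨G, d, -, hsubgradient, hd⟩ t ht t' ht'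
    obtain ⟨hdt', hGt'⟩ := hd t' ht'
    have hsubgradient' : IsSubgradientAt G (convexHull ℝ T) (LinearMap.proj (f t')) t' :=
      hdt' ▸ hsubgradient t' ht'
    have hsupport := (isSubgradientAt_linear_iff (a := utility f p t') hGt').1
      hsubgradient' t (subset_convexHull ℝ T ht)
    exact (hd t ht).2 ▸ hsupport
end

section
/- Let V be a real vector space, T ⊆ V nonempty, and {d_t}_{t∈T} a family of linear maps d_t : V → ℝ. Then {d_t} satisfies cyclic monotonicity — for every finite sequence t₀, …, t_k ∈ T, Σ_{i=0}^{k} d_{t_i}(t_{i+1} − t_i) ≤ 0, indices taken modulo k+1 — if and only if there exists a convex function G : convexHull(T) → ℝ such that {d_t}_{t∈T} is a selection of subgradients of G on T. -/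
/-!
Rochet's construction. Fix `t₀ ∈ T`. Every finite chain `t₀, t₁, …, tₙ` in `T` gives the affine
function `x ↦ ∑ d_{tᵢ}(tᵢ₊₁ - tᵢ) + d_{tₙ}(x - tₙ)`, and `G` is the supremum of all of them.
Closing a chain at `t ∈ T` into a cycle through `t₀` shows, by cyclic monotonicity, that these
affine functions are bounded above at every `t ∈ T`, hence on `convexHull T`, so `G` is a finite
convex function there; appending `t` to a chain shows that `d_t` is a subgradient of `G` at `t`.
Conversely, summing the subgradient inequalities along a cycle telescopes to `0`.
-/

open Set

section AffineSup

variable {ι E : Type*} [AddCommGroup E] [Module ℝ E] (f : ι → E →ᵃ[ℝ] ℝ)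

theorem convex_setOf_bddAbove_range_affine :
    Convex ℝ {x | BddAbove (range fun i => f i x)} := by
  rintro x ⟨Mx, hMx⟩ y ⟨My, hMy⟩ a b ha hb hab
  refine ⟨a * Mx + b * My, forall_mem_range.2 fun i => ?_⟩
  rw [Convex.combo_affine_apply hab, smul_eq_mul, smul_eq_mul]
  gcongr
  exacts [hMx (mem_range_self i), hMy (mem_range_self i)]

theorem convexOn_iSup_affine [Nonempty ι] {s : Set E} (hs : Convex ℝ s)
    (hbdd : ∀ x ∈ s, BddAbove (range fun i => f i x)) :
    ConvexOn ℝ s fun x => ⨆ i, f i x := by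
  refine ⟨hs, fun x hx y hy a b ha hb hab => ciSup_le fun i => ?_⟩
  rw [Convex.combo_affine_apply hab, smul_eq_mul, smul_eq_mul, smul_eq_mul, smul_eq_mul]
  gcongr
  exacts [le_ciSup (hbdd x hx) i, le_ciSup (hbdd y hy) i]

end AffineSup

namespace Rochet

variable {V : Type*}

structure Chain (T : Set V) (t₀ : V) where
  len : ℕ
  pt : Fin (len + 1) → V
  pt_zero : pt 0 = t₀
  pt_mem : ∀ i, pt i ∈ T

namespace Chain

variable {T : Set V} {t₀ : V}

def last (c : Chain T t₀) : V := c.pt (Fin.last c.len)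

theorem nonempty (ht₀ : t₀ ∈ T) : Nonempty (Chain T t₀) := ⟨⟨0, fun _ => t₀, rfl, fun _ => ht₀⟩⟩

def snoc (c : Chain T t₀) {t : V} (ht : t ∈ T) : Chain T t₀ where
  len := c.len + 1
  pt := Fin.snoc c.pt t
  pt_zero := by rw [← Fin.castSucc_zero, Fin.snoc_castSucc, c.pt_zero]
  pt_mem := Fin.lastCases (by rwa [Fin.snoc_last]) fun i => by
    rw [Fin.snoc_castSucc]; exact c.pt_mem i

end Chain

variable [AddCommGroup V] [Module ℝ V]

def CyclicallyMonotone (T : Set V) (d : V → V →ₗ[ℝ] ℝ) : Prop :=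
  ∀ (k : ℕ) (t : Fin (k + 1) → V), (∀ i, t i ∈ T) →
    ∑ i : Fin (k + 1), d (t i) (t (i + 1) - t i) ≤ 0

theorem cyclicallyMonotone_of_subgradient {T : Set V} {d : V → V →ₗ[ℝ] ℝ} {G : V → ℝ}
    (hG : ∀ t ∈ T, ∀ s ∈ T, G t + d t (s - t) ≤ G s) : CyclicallyMonotone T d := by
  intro k t ht
  calc ∑ i, d (t i) (t (i + 1) - t i)
      ≤ ∑ i, (G (t (i + 1)) - G (t i)) :=
        Finset.sum_le_sum fun i _ => le_sub_iff_add_le'.2 (hG _ (ht i) _ (ht (i + 1)))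
    _ = 0 := by
        rw [Finset.sum_sub_distrib, sub_eq_zero]
        exact Equiv.sum_comp (Equiv.addRight 1) fun i => G (t i)

def chainSum (d : V → V →ₗ[ℝ] ℝ) {n : ℕ} (t : Fin (n + 1) → V) : ℝ :=
  ∑ i : Fin n, d (t i.castSucc) (t i.succ - t i.castSucc)

theorem chainSum_snoc (d : V → V →ₗ[ℝ] ℝ) {n : ℕ} (t : Fin (n + 1) → V) (s : V) :
    chainSum d (Fin.snoc t s : Fin (n + 2) → V) =
      chainSum d t + d (t (Fin.last n)) (s - t (Fin.last n)) := by
  simp only [chainSum, Fin.sum_univ_castSucc, Fin.succ_castSucc, Fin.snoc_castSucc, Fin.succ_last,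
    Fin.snoc_last]

theorem sum_cyclic_eq_chainSum_add (d : V → V →ₗ[ℝ] ℝ) {n : ℕ} (t : Fin (n + 1) → V) :
    ∑ i : Fin (n + 1), d (t i) (t (i + 1) - t i) =
      chainSum d t + d (t (Fin.last n)) (t 0 - t (Fin.last n)) := by
  simp only [chainSum, Fin.sum_univ_castSucc, Fin.coeSucc_eq_succ, Fin.last_add_one]

namespace Chain

variable {T : Set V} {t₀ : V}

def affine (d : V → V →ₗ[ℝ] ℝ) (c : Chain T t₀) : V →ᵃ[ℝ] ℝ :=
  (d c.last).toAffineMap + AffineMap.const ℝ V (chainSum d c.pt - d c.last c.last)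

theorem affine_apply (d : V → V →ₗ[ℝ] ℝ) (c : Chain T t₀) (x : V) :
    c.affine d x = chainSum d c.pt + d c.last (x - c.last) := by
  simp only [affine, AffineMap.coe_add, Pi.add_apply, LinearMap.coe_toAffineMap,
    AffineMap.const_apply, map_sub]
  ring

theorem affine_snoc_apply (d : V → V →ₗ[ℝ] ℝ) (c : Chain T t₀) {t : V} (ht : t ∈ T) (x : V) :
    (c.snoc ht).affine d x = c.affine d t + d t (x - t) := by
  simp only [affine_apply, snoc, last, chainSum_snoc, Fin.snoc_last]

theorem affine_apply_start_nonpos {d : V → V →ₗ[ℝ] ℝ} (hd : CyclicallyMonotone T d)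
    (c : Chain T t₀) : c.affine d t₀ ≤ 0 := by
  have := hd c.len c.pt c.pt_mem
  rwa [sum_cyclic_eq_chainSum_add, c.pt_zero, ← last, ← affine_apply] at this

theorem affine_apply_le {d : V → V →ₗ[ℝ] ℝ} (hd : CyclicallyMonotone T d)
    (c : Chain T t₀) {t : V} (ht : t ∈ T) : c.affine d t ≤ -d t (t₀ - t) := by
  have := affine_apply_start_nonpos hd (c.snoc ht)
  rw [affine_snoc_apply] at this
  linarith

end Chain

theorem bddAbove_range_chain_affine {T : Set V} {d : V → V →ₗ[ℝ] ℝ} {t₀ : V}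
    (hd : CyclicallyMonotone T d) {x : V} (hx : x ∈ convexHull ℝ T) :
    BddAbove (range fun c : Chain T t₀ => c.affine d x) :=
  (convex_setOf_bddAbove_range_affine fun c : Chain T t₀ => c.affine d).convexHull_subset_iff.2
    (fun _ ht => ⟨_, forall_mem_range.2 fun c => c.affine_apply_le hd ht⟩) hx

noncomputable def potential (T : Set V) (d : V → V →ₗ[ℝ] ℝ) (t₀ : V) (x : V) : ℝ :=
  ⨆ c : Chain T t₀, c.affine d x

theorem convexOn_potential {T : Set V} {d : V → V →ₗ[ℝ] ℝ} {t₀ : V} (ht₀ : t₀ ∈ T)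
    (hd : CyclicallyMonotone T d) : ConvexOn ℝ (convexHull ℝ T) (potential T d t₀) :=
  have := Chain.nonempty ht₀
  convexOn_iSup_affine _ (convex_convexHull ℝ T) fun _ => bddAbove_range_chain_affine hd

theorem potential_add_le {T : Set V} {d : V → V →ₗ[ℝ] ℝ} {t₀ : V} (ht₀ : t₀ ∈ T)
    (hd : CyclicallyMonotone T d) {t : V} (ht : t ∈ T) {x : V} (hx : x ∈ convexHull ℝ T) :
    potential T d t₀ t + d t (x - t) ≤ potential T d t₀ x := by
  have := Chain.nonempty ht₀
  rw [← le_sub_iff_add_le]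
  refine ciSup_le fun c => le_sub_iff_add_le.2 ?_
  rw [← c.affine_snoc_apply d ht]
  exact le_ciSup (bddAbove_range_chain_affine hd hx) _

end Rochet

/-- Rochet's theorem: a family of linear maps `{d_t}_{t ∈ T}` is cyclically monotone iff
it is a selection of subgradients on `T` of some convex function on `convexHull T`. -/
theorem cyclic_monotonicity_iff_subgradient {V : Type*} [AddCommGroup V] [Module ℝ V]
    (T : Set V) (hT : T.Nonempty) (d : V → (V →ₗ[ℝ] ℝ)) :
    (∀ (k : ℕ) (t : Fin (k + 1) → V), (∀ i, t i ∈ T) →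
      ∑ i : Fin (k + 1), d (t i) (t (i + 1) - t i) ≤ 0) ↔
    ∃ G : V → ℝ, ConvexOn ℝ (convexHull ℝ T) G ∧
      ∀ t ∈ T, ∀ x ∈ convexHull ℝ T, G t + d t (x - t) ≤ G x := by
  refine ⟨fun hd => ?_, fun ⟨G, _, hG⟩ => ?_⟩
  · obtain ⟨t₀, ht₀⟩ := hT
    exact ⟨Rochet.potential T d t₀, Rochet.convexOn_potential ht₀ hd,
      fun t ht x hx => Rochet.potential_add_le ht₀ hd ht hx⟩
  · exact Rochet.cyclicallyMonotone_of_subgradient fun t ht s hs =>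
      hG t ht s (subset_convexHull ℝ T hs)
end

section
/- Let V be a real vector space, T ⊆ V a nonempty convex set, and {d_t}_{t∈T} a family of linear maps d_t : V → ℝ. Then there exists a convex function G : T → ℝ such that d_t is a subgradient of G at t for every t ∈ T if and only if {d_t} satisfies both: (i) weak monotonicity (WMON): d_t(t' − t) ≤ d_{t'}(t' − t) for all t, t' ∈ T; and (ii) path independence: for all x, y, z ∈ T, ∫₀¹ d_{x+s(y−x)}(y − x) ds + ∫₀¹ d_{y+s(z−y)}(z − y) ds = ∫₀¹ d_{x+s(z−x)}(z − x) ds, where each integrand s ↦ d_{a+s(b−a)}(b − a) for a, b ∈ T is assumed integrable on [0,1] (this holds automatically under WMON, since the integrands are then monotone). -/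
/-!
Along a segment `s ↦ a + s • (b - a)` of `T`, the subgradient inequality says that the integrand
`h s = d_{a + s(b - a)}(b - a)` is a subderivative of `g s = G (a + s • (b - a))`. Such an `h` is
monotone, hence continuous off a countable set, and at its continuity points it is the derivative
of `g`; the fundamental theorem of calculus with countably many exceptions then gives
`∫₀¹ h = G b - G a`, so the line integrals telescope. Conversely, `G x := ∫` along `[t₀, x]`
satisfies `G x - G t = ∫` along `[t, x]` by path independence, and WMON makes that integrand
monotone, so the integral dominates its value `d_t (x - t)` at `s = 0`. A function with a
subgradient at every point of `T` is convex on `T`.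
-/

open Set Filter Topology

section Subderivative

variable {g h : ℝ → ℝ}

theorem monotoneOn_of_mul_sub_le {s : Set ℝ}
    (hh : ∀ x ∈ s, ∀ y ∈ s, (y - x) * h x ≤ (y - x) * h y) : MonotoneOn h s := by
  intro x hx y hy hxy
  rcases hxy.eq_or_lt with rfl | hlt
  · rfl
  · exact le_of_mul_le_mul_left (hh x hx y hy) (sub_pos.2 hlt)

theorem monotoneOn_of_forall_add_mul_le {s : Set ℝ}
    (hsub : ∀ x ∈ s, ∀ y ∈ s, g x + (y - x) * h x ≤ g y) : MonotoneOn h s :=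
  monotoneOn_of_mul_sub_le fun x hx y hy => by
    linarith [hsub x hx y hy, hsub y hy x hx]

theorem abs_sub_le_mul_of_forall_add_mul_le {s : Set ℝ}
    (hsub : ∀ x ∈ s, ∀ y ∈ s, g x + (y - x) * h x ≤ g y) {x y : ℝ} (hx : x ∈ s) (hy : y ∈ s) :
    |g y - g x - (y - x) * h x| ≤ |y - x| * |h y - h x| := by
  have lower := hsub x hx y hy
  have upper := hsub y hy x hx
  rw [← abs_mul, abs_of_nonneg (by linarith)]
  nlinarith [le_abs_self ((y - x) * (h y - h x))]

theorem continuousOn_of_forall_add_mul_le {a b : ℝ}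
    (hsub : ∀ x ∈ Icc a b, ∀ y ∈ Icc a b, g x + (y - x) * h x ≤ g y) :
    ContinuousOn g (Icc a b) := by
  have hmono := monotoneOn_of_forall_add_mul_le hsub
  set M := max |h a| |h b|
  have hbound : ∀ x ∈ Icc a b, |h x| ≤ M := fun x hx => by
    have := hmono (left_mem_Icc.2 (hx.1.trans hx.2)) hx hx.1
    have := hmono hx (right_mem_Icc.2 (hx.1.trans hx.2)) hx.2
    rw [abs_le]
    constructor <;> linarith [neg_abs_le (h a), le_abs_self (h b), le_max_left |h a| |h b|,
      le_max_right |h a| |h b|]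
  refine (LipschitzOnWith.of_dist_le' (K := M) fun x hx y hy => ?_).continuousOn
  rw [Real.dist_eq, Real.dist_eq, abs_sub_comm x y]
  have lower := hsub y hy x hx
  have upper := hsub x hx y hy
  rw [abs_le]
  constructor <;> nlinarith [abs_le.1 (hbound x hx), abs_le.1 (hbound y hy),
    abs_mul_abs_self (y - x), le_abs_self (y - x), neg_abs_le (y - x), abs_nonneg (y - x)]

theorem hasDerivAt_of_forall_add_mul_le {s : Set ℝ}
    (hsub : ∀ x ∈ s, ∀ y ∈ s, g x + (y - x) * h x ≤ g y) {x : ℝ} (hs : s ∈ 𝓝 x)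
    (hcont : ContinuousAt h x) : HasDerivAt g (h x) x := by
  rw [hasDerivAt_iff_tendsto_slope, tendsto_iff_norm_sub_tendsto_zero]
  have hlim : Tendsto (fun y => |h y - h x|) (𝓝[≠] x) (𝓝 0) := by
    have hc : ContinuousAt (fun y => |h y - h x|) x := (hcont.sub continuousAt_const).abs
    simpa using hc.tendsto.mono_left nhdsWithin_le_nhds
  refine squeeze_zero' (Eventually.of_forall fun _ => norm_nonneg _) ?_ hlim
  filter_upwards [self_mem_nhdsWithin, nhdsWithin_le_nhds hs] with y (hyx : y ≠ x) hy
  have hyx' : y - x ≠ 0 := sub_ne_zero.2 hyx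
  have key := abs_sub_le_mul_of_forall_add_mul_le hsub (mem_of_mem_nhds hs) hy
  rw [slope_def_field, Real.norm_eq_abs, div_sub' hyx', abs_div,
    div_le_iff₀ (abs_pos.2 hyx'), mul_comm |h y - h x|]
  exact key

theorem integral_eq_sub_of_forall_add_mul_le {a b : ℝ} (hab : a ≤ b)
    (hsub : ∀ x ∈ Icc a b, ∀ y ∈ Icc a b, g x + (y - x) * h x ≤ g y) :
    ∫ x in a..b, h x = g b - g a := by
  have hmono := monotoneOn_of_forall_add_mul_le hsub
  refine MeasureTheory.integral_eq_of_hasDerivAt_off_countable_of_le g h hab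
    hmono.countable_not_continuousWithinAt (continuousOn_of_forall_add_mul_le hsub) ?_
    (hmono.mono (uIcc_of_le hab).le).intervalIntegrable
  rintro x ⟨hx, hcont⟩
  have hIcc : Icc a b ∈ 𝓝 x := Icc_mem_nhds hx.1 hx.2
  refine hasDerivAt_of_forall_add_mul_le hsub hIcc ?_
  by_contra hdisc
  exact hcont ⟨Ioo_subset_Icc_self hx, fun h' => hdisc (h'.continuousAt hIcc)⟩

end Subderivative

section LineIntegral

variable {V : Type*} [AddCommGroup V] [Module ℝ V]

noncomputable def lineIntegral (d : V → V →ₗ[ℝ] ℝ) (a b : V) : ℝ :=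
  ∫ s in (0:ℝ)..1, d (a + s • (b - a)) (b - a)

theorem weakMonotone_of_subgradient {T : Set V} {G : V → ℝ} {d : V → V →ₗ[ℝ] ℝ}
    (hsub : ∀ t ∈ T, ∀ x ∈ T, G t + d t (x - t) ≤ G x) :
    ∀ t ∈ T, ∀ t' ∈ T, d t (t' - t) ≤ d t' (t' - t) := by
  intro t ht t' ht'
  have forward := hsub t ht t' ht'
  have backward := hsub t' ht' t ht
  rw [← neg_sub, map_neg] at backward
  linarith

theorem convexOn_of_subgradient {T : Set V} (hT : Convex ℝ T) {G : V → ℝ}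
    {d : V → V →ₗ[ℝ] ℝ} (hsub : ∀ t ∈ T, ∀ x ∈ T, G t + d t (x - t) ≤ G x) :
    ConvexOn ℝ T G := by
  refine ⟨hT, fun x hx y hy θ τ hθ hτ hθτ => ?_⟩
  set t := θ • x + τ • y
  have hzero : θ * d t (x - t) + τ * d t (y - t) = 0 := by
    have : θ • (x - t) + τ • (y - t) = 0 := by
      linear_combination (norm := module) (-hθτ) • t
    simpa using congrArg (d t) this
  have hx' := mul_le_mul_of_nonneg_left (hsub t (hT hx hy hθ hτ hθτ) x hx) hθ
  have hy' := mul_le_mul_of_nonneg_left (hsub t (hT hx hy hθ hτ hθτ) y hy) hτ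
  calc G t = (θ + τ) * G t := by rw [hθτ, one_mul]
    _ ≤ θ * G x + τ * G y := by linarith

theorem segment_sub_segment (a b : V) (s s' : ℝ) :
    a + s' • (b - a) - (a + s • (b - a)) = (s' - s) • (b - a) := by
  module

theorem monotoneOn_lineIntegrand_of_weakMonotone {T : Set V} (hT : Convex ℝ T)
    {d : V → V →ₗ[ℝ] ℝ} (hW : ∀ t ∈ T, ∀ t' ∈ T, d t (t' - t) ≤ d t' (t' - t))
    {a b : V} (ha : a ∈ T) (hb : b ∈ T) :
    MonotoneOn (fun s : ℝ => d (a + s • (b - a)) (b - a)) (Icc 0 1) :=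
  monotoneOn_of_mul_sub_le fun s hs s' hs' => by
    have := hW _ (hT.add_smul_sub_mem ha hb hs) _ (hT.add_smul_sub_mem ha hb hs')
    rwa [segment_sub_segment, map_smul, map_smul, smul_eq_mul, smul_eq_mul] at this

theorem lineIntegral_eq_sub_of_subgradient {T : Set V} (hT : Convex ℝ T) {G : V → ℝ}
    {d : V → V →ₗ[ℝ] ℝ} (hsub : ∀ t ∈ T, ∀ x ∈ T, G t + d t (x - t) ≤ G x)
    {a b : V} (ha : a ∈ T) (hb : b ∈ T) :
    lineIntegral d a b = G b - G a := by
  have := integral_eq_sub_of_forall_add_mul_le zero_le_one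
    (g := fun s => G (a + s • (b - a))) (h := fun s => d (a + s • (b - a)) (b - a))
    fun s hs s' hs' => by
      have := hsub _ (hT.add_smul_sub_mem ha hb hs) _ (hT.add_smul_sub_mem ha hb hs')
      rwa [segment_sub_segment, map_smul, smul_eq_mul] at this
  rwa [zero_smul, add_zero, one_smul, add_sub_cancel] at this

theorem apply_sub_le_lineIntegral {T : Set V} (hT : Convex ℝ T) {d : V → V →ₗ[ℝ] ℝ}
    (hW : ∀ t ∈ T, ∀ t' ∈ T, d t (t' - t) ≤ d t' (t' - t)) {a b : V} (ha : a ∈ T) (hb : b ∈ T) :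
    d a (b - a) ≤ lineIntegral d a b := by
  have hmono := monotoneOn_lineIntegrand_of_weakMonotone hT hW ha hb
  have h0 : (0:ℝ) ∈ Icc 0 1 := left_mem_Icc.2 zero_le_one
  calc d a (b - a) = ∫ _ in (0:ℝ)..1, d a (b - a) := by simp
    _ ≤ lineIntegral d a b :=
      intervalIntegral.integral_mono_on zero_le_one intervalIntegrable_const
        (hmono.mono (uIcc_of_le zero_le_one).le).intervalIntegrable
        fun s hs => by simpa using hmono h0 hs hs.1

end LineIntegral

theorem wmon_path_independence_iff_subgradient_general {V : Type*} [AddCommGroup V] [Module ℝ V]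
    (T : Set V) (hT : T.Nonempty) (hTconv : Convex ℝ T) (d : V → (V →ₗ[ℝ] ℝ)) :
    (∃ G : V → ℝ, ConvexOn ℝ T G ∧ ∀ t ∈ T, ∀ x ∈ T, G t + d t (x - t) ≤ G x) ↔
    ((∀ t ∈ T, ∀ t' ∈ T, d t (t' - t) ≤ d t' (t' - t)) ∧
      (∀ x ∈ T, ∀ y ∈ T, ∀ z ∈ T,
        (∫ s in (0:ℝ)..1, d (x + s • (y - x)) (y - x)) +
          (∫ s in (0:ℝ)..1, d (y + s • (z - y)) (z - y)) =
          ∫ s in (0:ℝ)..1, d (x + s • (z - x)) (z - x))) := by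
  change _ ↔ _ ∧ ∀ x ∈ T, ∀ y ∈ T, ∀ z ∈ T,
    lineIntegral d x y + lineIntegral d y z = lineIntegral d x z
  constructor
  · rintro ⟨G, -, hsub⟩
    refine ⟨weakMonotone_of_subgradient hsub, fun x hx y hy z hz => ?_⟩
    rw [lineIntegral_eq_sub_of_subgradient hTconv hsub hx hy,
      lineIntegral_eq_sub_of_subgradient hTconv hsub hy hz,
      lineIntegral_eq_sub_of_subgradient hTconv hsub hx hz]
    ring
  · rintro ⟨hW, hPI⟩
    obtain ⟨t₀, ht₀⟩ := hT
    have hsub : ∀ t ∈ T, ∀ x ∈ T, lineIntegral d t₀ t + d t (x - t) ≤ lineIntegral d t₀ x :=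
      fun t ht x hx => by
        linarith [hPI t₀ ht₀ t ht x hx, apply_sub_le_lineIntegral hTconv hW ht hx]
    exact ⟨_, convexOn_of_subgradient hTconv hsub, hsub⟩

/-- Müller–Perea–Wolf: on a convex type space `T`, a family of linear maps `{d_t}` is a
selection of subgradients of some convex function on `T` iff it satisfies weak
monotonicity and path independence of its line integrals (the integrands being assumed
integrable on `[0,1]`, which holds automatically under WMON). -/
theorem wmon_path_independence_iff_subgradient {V : Type*} [AddCommGroup V] [Module ℝ V]
    (T : Set V) (hT : T.Nonempty) (hTconv : Convex ℝ T) (d : V → (V →ₗ[ℝ] ℝ))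
    (hInt : ∀ a ∈ T, ∀ b ∈ T,
      IntervalIntegrable (fun s : ℝ => d (a + s • (b - a)) (b - a)) MeasureTheory.volume 0 1) :
    (∃ G : V → ℝ, ConvexOn ℝ T G ∧ ∀ t ∈ T, ∀ x ∈ T, G t + d t (x - t) ≤ G x) ↔
    ((∀ t ∈ T, ∀ t' ∈ T, d t (t' - t) ≤ d t' (t' - t)) ∧
      (∀ x ∈ T, ∀ y ∈ T, ∀ z ∈ T,
        (∫ s in (0:ℝ)..1, d (x + s • (y - x)) (y - x)) +
          (∫ s in (0:ℝ)..1, d (y + s • (z - y)) (z - y)) =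
          ∫ s in (0:ℝ)..1, d (x + s • (z - x)) (z - x))) :=
  wmon_path_independence_iff_subgradient_general T hT hTconv d
end

section
/- Let V be a real topological vector space, T ⊆ V a nonempty convex set, G : T → ℝ a convex function, and {d_t}_{t∈T} a family of linear maps d_t : V → ℝ. Then d_t is a subgradient of G at t for every t ∈ T if and only if {d_t} is a weak local subgradient of G: for every t ∈ T there is an open set U ⊆ V containing t such that for all t' ∈ U ∩ T, both G(t) ≥ G(t') + d_{t'}(t − t') and G(t') ≥ G(t) + d_t(t' − t). -/
/-!
The inequality `G t + d t (x - t) ≤ G x` says that the convex function `G - d t` attains its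
minimum over `T` at `t`. Hence the local inequality makes `t` a local minimum of `G - d t` on `T`,
and a local minimum of a convex function is a global one.
-/

open Filter Topology

theorem ConvexOn.add_map_sub_le_of_eventually {V : Type*} [AddCommGroup V] [Module ℝ V]
    [TopologicalSpace V] [IsTopologicalAddGroup V] [ContinuousSMul ℝ V]
    {T : Set V} {G : V → ℝ} (hG : ConvexOn ℝ T G) {t : V} (ht : t ∈ T) (f : V →ₗ[ℝ] ℝ)
    (hloc : ∀ᶠ y in 𝓝[T] t, G t + f (y - t) ≤ G y) {x : V} (hx : x ∈ T) :
    G t + f (x - t) ≤ G x := by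
  have hlocalMin : IsLocalMinOn (G - ⇑f) T t :=
    hloc.mono fun y hy => by
      simp only [Pi.sub_apply, map_sub] at hy ⊢
      linarith
  have hmin : IsMinOn (G - ⇑f) T t :=
    IsMinOn.of_isLocalMinOn_of_convexOn ht hlocalMin (hG.sub (f.concaveOn hG.1))
  have hx' : G t - f t ≤ G x - f x := hmin hx
  rw [map_sub]
  linarith

theorem weak_local_subgradient_iff_subgradient_general {V : Type*} [AddCommGroup V] [Module ℝ V]
    [TopologicalSpace V] [IsTopologicalAddGroup V] [ContinuousSMul ℝ V]
    (T : Set V)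
    (G : V → ℝ) (hG : ConvexOn ℝ T G) (d : V → (V →ₗ[ℝ] ℝ)) :
    (∀ t ∈ T, ∀ x ∈ T, G t + d t (x - t) ≤ G x) ↔
    (∀ t ∈ T, ∃ U : Set V, IsOpen U ∧ t ∈ U ∧
      ∀ t' ∈ U ∩ T, G t' + d t' (t - t') ≤ G t ∧ G t + d t (t' - t) ≤ G t') := by
  constructor
  · intro h t ht
    exact ⟨Set.univ, isOpen_univ, Set.mem_univ t,
      fun t' ht' => ⟨h t' ht'.2 t ht, h t ht t' ht'.2⟩⟩
  · intro h t ht x hx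
    obtain ⟨U, hU, htU, hUT⟩ := h t ht
    exact hG.add_map_sub_le_of_eventually ht (d t)
      (mem_nhdsWithin.2 ⟨U, hU, htU, fun y hy => (hUT y hy).2⟩) hx

/-- On a convex type space in a real topological vector space, a family of linear maps
is a selection of subgradients of a convex function `G` iff it is a weak local
subgradient of `G`. -/
theorem weak_local_subgradient_iff_subgradient {V : Type*} [AddCommGroup V] [Module ℝ V]
    [TopologicalSpace V] [IsTopologicalAddGroup V] [ContinuousSMul ℝ V]
    (T : Set V) (hT : T.Nonempty) (hTconv : Convex ℝ T)
    (G : V → ℝ) (hG : ConvexOn ℝ T G) (d : V → (V →ₗ[ℝ] ℝ)) :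
    (∀ t ∈ T, ∀ x ∈ T, G t + d t (x - t) ≤ G x) ↔
    (∀ t ∈ T, ∃ U : Set V, IsOpen U ∧ t ∈ U ∧
      ∀ t' ∈ U ∩ T, G t' + d t' (t - t') ≤ G t ∧ G t + d t (t' - t) ≤ G t') :=
  weak_local_subgradient_iff_subgradient_general T G hG d
end

section
/- Let V be a real topological vector space, T ⊆ V a nonempty convex set, and A : T → (V → ℝ) an affine score. Then A is truthful if and only if A is weakly locally truthful: for every t ∈ T there is an open set U ⊆ V containing t such that for all t' ∈ U ∩ T, both A(t')(t) ≤ A(t)(t) and A(t)(t') ≤ A(t')(t'). -/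
/-!
Restrict the score to the segment from `t` to `t'`. There, mutual truthfulness of two types
`x < y` says that the slopes of their affine payoffs are ordered and bracket the difference
quotient of the diagonal values, so it is transitive along ordered triples `x ≤ y ≤ z`.
A supremum argument on `[0, 1]` then propagates the local property from `t` to `t'`.
-/

open Set Filter Topology

def MutuallyTruthful {α : Type*} (A : α → α → ℝ) (t t' : α) : Prop :=
  A t' t ≤ A t t ∧ A t t' ≤ A t' t'

theorem MutuallyTruthful.symm {α : Type*} {A : α → α → ℝ} {t t' : α}
    (h : MutuallyTruthful A t t') : MutuallyTruthful A t' t :=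
  And.symm h

theorem MutuallyTruthful.trans_of_le {B : ℝ → ℝ → ℝ} {x y z : ℝ}
    (hBx : ∃ a c : ℝ, ∀ r, B x r = a * r + c) (hBy : ∃ a c : ℝ, ∀ r, B y r = a * r + c)
    (hBz : ∃ a c : ℝ, ∀ r, B z r = a * r + c) (hxy : x ≤ y) (hyz : y ≤ z)
    (h₁ : MutuallyTruthful B x y) (h₂ : MutuallyTruthful B y z) : MutuallyTruthful B x z := by
  rcases hxy.eq_or_lt with rfl | hxy
  · exact h₂
  rcases hyz.eq_or_lt with rfl | hyz
  · exact h₁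
  obtain ⟨ax, cx, hx⟩ := hBx
  obtain ⟨ay, cy, hy⟩ := hBy
  obtain ⟨az, cz, hz⟩ := hBz
  simp only [MutuallyTruthful, hx, hy, hz] at h₁ h₂ ⊢
  have hxy_slope : ax ≤ ay := by nlinarith
  have hyz_slope : ay ≤ az := by nlinarith
  constructor <;> nlinarith

theorem exists_affine_comp_lineMap {V : Type*} [AddCommGroup V] [Module ℝ V] {f : V → ℝ}
    (hf : ∃ (ℓ : V →ₗ[ℝ] ℝ) (c : ℝ), ∀ x, f x = ℓ x + c) (t t' : V) :
    ∃ a c : ℝ, ∀ r, f (AffineMap.lineMap t t' r) = a * r + c := by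
  obtain ⟨ℓ, c, hf⟩ := hf
  refine ⟨ℓ (t' - t), ℓ t + c, fun r => ?_⟩
  simp only [hf, AffineMap.lineMap_apply, vsub_eq_sub, vadd_eq_add, map_add, map_smul,
    smul_eq_mul]
  ring

theorem rel_of_trans_of_eventually {α : Type*} [ConditionallyCompleteLinearOrder α]
    [TopologicalSpace α] [OrderTopology α] [DenselyOrdered α] {R : α → α → Prop} {a b : α}
    (hab : a ≤ b)
    (htrans : ∀ x y z, a ≤ x → x ≤ y → y ≤ z → z ≤ b → R x y → R y z → R x z)
    (hloc : ∀ x ∈ Icc a b, ∀ᶠ y in 𝓝[Icc a b] x, R x y ∧ R y x) : R a b := by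
  set S := {x | x ∈ Icc a b ∧ R a x}
  have ha : a ∈ Icc a b := left_mem_Icc.2 hab
  have haS : a ∈ S := ⟨ha, ((hloc a ha).self_of_nhdsWithin ha).1⟩
  have hbdd : BddAbove S := ⟨b, fun x hx => hx.1.2⟩
  set m := sSup S
  have hm : m ∈ Icc a b := ⟨le_csSup hbdd haS, csSup_le ⟨a, haS⟩ fun x hx => hx.1.2⟩
  have hRm : R a m := by
    have := mem_closure_iff_nhdsWithin_neBot.1 (csSup_mem_closure ⟨a, haS⟩ hbdd)
    obtain ⟨x, hRx, hxS⟩ :=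
      (((hloc m hm).filter_mono (nhdsWithin_mono _ fun _ (hx : _ ∈ S) => hx.1)).and
        self_mem_nhdsWithin).exists
    exact htrans a x m le_rfl hxS.1.1 (le_csSup hbdd hxS) hm.2 hxS.2 hRx.2
  obtain hmb | hmb := hm.2.eq_or_lt
  · rwa [← hmb]
  have := left_nhdsWithin_Ioc_neBot hmb
  obtain ⟨y, hRy, hy⟩ :=
    (((hloc m hm).filter_mono (nhdsWithin_mono _ (Ioc_subset_Icc_self.trans
      (Icc_subset_Icc_left hm.1)))).and self_mem_nhdsWithin).exists
  have hyS : y ∈ S :=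
    ⟨⟨hm.1.trans hy.1.le, hy.2⟩, htrans a m y le_rfl hm.1 hy.1.le hy.2 hRm hRy.1⟩
  exact absurd (le_csSup hbdd hyS) hy.1.not_ge

theorem truthful_iff_weakly_locally_truthful_general {V : Type*} [AddCommGroup V] [Module ℝ V]
    [TopologicalSpace V] [IsTopologicalAddGroup V] [ContinuousSMul ℝ V]
    (T : Set V) (hTconv : Convex ℝ T)
    (A : V → V → ℝ)
    (hA : ∀ t' ∈ T, ∃ (ℓ : V →ₗ[ℝ] ℝ) (c : ℝ), ∀ x, A t' x = ℓ x + c) :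
    (∀ t ∈ T, ∀ t' ∈ T, A t' t ≤ A t t) ↔
    (∀ t ∈ T, ∃ U : Set V, IsOpen U ∧ t ∈ U ∧
      ∀ t' ∈ U ∩ T, A t' t ≤ A t t ∧ A t t' ≤ A t' t') := by
  refine ⟨fun h t ht => ⟨univ, isOpen_univ, trivial, fun t' ht' =>
    ⟨h t ht t' ht'.2, h t' ht'.2 t ht⟩⟩, fun h t ht t' ht' => ?_⟩
  set p : ℝ →ᵃ[ℝ] V := AffineMap.lineMap t t'
  have hpT : ∀ r ∈ Icc (0 : ℝ) 1, p r ∈ T := fun r hr => hTconv.lineMap_mem ht ht' hr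
  have hB : ∀ r ∈ Icc (0 : ℝ) 1, ∃ a c : ℝ, ∀ s, A (p r) (p s) = a * s + c :=
    fun r hr => exists_affine_comp_lineMap (hA (p r) (hpT r hr)) t t'
  have hsegment : MutuallyTruthful (fun x y => A (p x) (p y)) 0 1 := by
    refine rel_of_trans_of_eventually zero_le_one ?_ ?_
    · intro x y z hx hxy hyz hz
      exact MutuallyTruthful.trans_of_le (hB x ⟨hx, by linarith⟩)
        (hB y ⟨by linarith, by linarith⟩) (hB z ⟨by linarith, hz⟩) hxy hyz
    · intro x hx
      obtain ⟨U, hU, hxU, hUT⟩ := h (p x) (hpT x hx)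
      have hpU : ∀ᶠ y in 𝓝 x, p y ∈ U :=
        AffineMap.lineMap_continuous.continuousAt.preimage_mem_nhds (hU.mem_nhds hxU)
      filter_upwards [nhdsWithin_le_nhds hpU, self_mem_nhdsWithin] with y hyU hy
      have hxy : MutuallyTruthful A (p x) (p y) := hUT (p y) ⟨hyU, hpT y hy⟩
      exact ⟨hxy, hxy.symm⟩
  simpa [p] using hsegment.1

/-- An affine score on a convex type space in a real topological vector space is
truthful iff it is weakly locally truthful. -/
theorem truthful_iff_weakly_locally_truthful {V : Type*} [AddCommGroup V] [Module ℝ V]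
    [TopologicalSpace V] [IsTopologicalAddGroup V] [ContinuousSMul ℝ V]
    (T : Set V) (hT : T.Nonempty) (hTconv : Convex ℝ T)
    (A : V → V → ℝ)
    (hA : ∀ t' ∈ T, ∃ (ℓ : V →ₗ[ℝ] ℝ) (c : ℝ), ∀ x, A t' x = ℓ x + c) :
    (∀ t ∈ T, ∀ t' ∈ T, A t' t ≤ A t t) ↔
    (∀ t ∈ T, ∃ U : Set V, IsOpen U ∧ t ∈ U ∧
      ∀ t' ∈ U ∩ T, A t' t ≤ A t t ∧ A t t' ≤ A t' t') :=
  truthful_iff_weakly_locally_truthful_general T hTconv A hA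
end

section
/- Let V be a real vector space, T ⊆ V nonempty, G : convexHull(T) → ℝ convex, and {d_t}_{t∈T} a selection of subgradients of G on T. Let S ⊆ T be nonempty, t* ∈ T \ S, and c ∈ ℝ. Then there exists a convex function G' : convexHull(T) → ℝ with G'(t) = G(t) for all t ∈ S, with {d_t}_{t∈T} a selection of subgradients of G' on T, and with G'(t*) = c, if and only if both: (i) for every finite sequence t₀, t₁, …, t_{k+1} ∈ T with t₀ ∈ S and t_{k+1} = t*, G(t₀) + Σ_{i=0}^{k} d_{t_i}(t_{i+1} − t_i) ≤ c; and (ii) for every finite sequence t₀, t₁, …, t_{k+1} ∈ T with t₀ = t* and t_{k+1} ∈ S, c ≤ G(t_{k+1}) − Σ_{i=0}^{k} d_{t_i}(t_{i+1} − t_i). -/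
/-!
Necessity: summing the subgradient inequalities `G' tᵢ + d tᵢ (tᵢ₊₁ - tᵢ) ≤ G' tᵢ₊₁` along a path
telescopes to `G' t₀ + Σ ≤ G' tₖ₊₁`.

Sufficiency is Rochet's construction. Prescribe the values `b = G` on `S` and `b tstar = c`; every
path `t₀, …, tₖ` in `T` starting at a prescribed point gives the affine function
`x ↦ b t₀ + Σ d tᵢ (tᵢ₊₁ - tᵢ) + d tₖ (x - tₖ)`, and `G'` is the supremum of all of them. It is convex
as a supremum of affine functions, `d t` is a subgradient at `t ∈ T` because appending `t` to a path
gives another path, and the path inequalities between prescribed points say exactly that `G'` keeps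
the prescribed values. Of those inequalities, the ones from `S` to `S` and from `tstar` to `tstar`
follow from the subgradients of `G`; the remaining ones are (i) and (ii).
-/

namespace PathExtension

lemma snoc_mem {α : Type*} {T : Set α} {n : ℕ} {t : Fin (n + 1) → α} {x : α} (ht : ∀ i, t i ∈ T)
    (hx : x ∈ T) (i : Fin (n + 2)) : (Fin.snoc t x : Fin (n + 2) → α) i ∈ T :=
  Fin.lastCases (by rwa [Fin.snoc_last]) (fun j => by rw [Fin.snoc_castSucc]; exact ht j) i

variable {V : Type*} [AddCommGroup V] [Module ℝ V]

def pathSum (d : V → V →ₗ[ℝ] ℝ) {n : ℕ} (t : Fin (n + 1) → V) : ℝ :=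
  ∑ i : Fin n, d (t i.castSucc) (t i.succ - t i.castSucc)

lemma pathSum_snoc (d : V → V →ₗ[ℝ] ℝ) {n : ℕ} (t : Fin (n + 1) → V) (x : V) :
    pathSum d (Fin.snoc t x) = pathSum d t + d (t (Fin.last n)) (x - t (Fin.last n)) := by
  simp only [pathSum, Fin.sum_univ_castSucc, Fin.succ_castSucc, Fin.snoc_castSucc, Fin.succ_last,
    Fin.snoc_last]

lemma add_pathSum_le {T : Set V} {G : V → ℝ} {d : V → V →ₗ[ℝ] ℝ}
    (hd : ∀ t ∈ T, ∀ x ∈ T, G t + d t (x - t) ≤ G x) :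
    ∀ {n : ℕ} (t : Fin (n + 1) → V), (∀ i, t i ∈ T) → G (t 0) + pathSum d t ≤ G (t (Fin.last n))
  | 0, t, _ => by simp [pathSum]
  | n + 1, t, ht => by
    induction t using Fin.snocCases with
    | snoc s x =>
      rw [Fin.forall_fin_succ', Fin.snoc_last] at ht
      simp only [Fin.snoc_castSucc] at ht
      have hs := add_pathSum_le hd s ht.1
      have hstep := hd _ (ht.1 (Fin.last n)) x ht.2
      rw [Fin.snoc_apply_zero, Fin.snoc_last, pathSum_snoc]
      linarith

def PathConsistent (T R : Set V) (b : V → ℝ) (d : V → V →ₗ[ℝ] ℝ) : Prop :=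
  ∀ (k : ℕ) (t : Fin (k + 2) → V), (∀ i, t i ∈ T) → t 0 ∈ R → t (Fin.last (k + 1)) ∈ R →
    b (t 0) + pathSum d t ≤ b (t (Fin.last (k + 1)))

def pathValue (b : V → ℝ) (d : V → V →ₗ[ℝ] ℝ) {n : ℕ} (t : Fin (n + 1) → V) (x : V) : ℝ :=
  b (t 0) + pathSum d t + d (t (Fin.last n)) (x - t (Fin.last n))

section pathValue

variable {b : V → ℝ} {d : V → V →ₗ[ℝ] ℝ}

lemma pathValue_const (r x : V) : pathValue b d (fun _ : Fin 1 => r) x = b r + d r (x - r) := by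
  simp [pathValue, pathSum]

lemma pathValue_snoc {n : ℕ} (t : Fin (n + 1) → V) (y x : V) :
    pathValue b d (Fin.snoc t y) x = pathValue b d t y + d y (x - y) := by
  rw [pathValue, pathValue, Fin.snoc_apply_zero, pathSum_snoc, Fin.snoc_last]
  ring

lemma pathValue_combo {n : ℕ} (t : Fin (n + 1) → V) (x y : V) {a c : ℝ} (hac : a + c = 1) :
    pathValue b d t (a • x + c • y) = a * pathValue b d t x + c * pathValue b d t y := by
  obtain rfl : c = 1 - a := by linarith
  have hsplit : a • x + (1 - a) • y - t (Fin.last n) =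
      a • (x - t (Fin.last n)) + (1 - a) • (y - t (Fin.last n)) := by module
  simp only [pathValue, hsplit, map_add, map_smul, smul_eq_mul]
  ring

end pathValue

def pathValues (T R : Set V) (b : V → ℝ) (d : V → V →ₗ[ℝ] ℝ) (x : V) : Set ℝ :=
  {r | ∃ (n : ℕ) (t : Fin (n + 1) → V), (∀ i, t i ∈ T) ∧ t 0 ∈ R ∧ pathValue b d t x = r}

noncomputable def pathExtension (T R : Set V) (b : V → ℝ) (d : V → V →ₗ[ℝ] ℝ) (x : V) : ℝ :=
  sSup (pathValues T R b d x)

section pathExtension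

variable {T R : Set V} {b : V → ℝ} {d : V → V →ₗ[ℝ] ℝ}

lemma pathValues_nonempty (hR : R.Nonempty) (hRT : R ⊆ T) (x : V) :
    (pathValues T R b d x).Nonempty := by
  obtain ⟨r, hr⟩ := hR
  exact ⟨_, 0, fun _ => r, fun _ => hRT hr, hr, rfl⟩

lemma PathConsistent.pathValue_le (hb : PathConsistent T R b d) {n : ℕ} {t : Fin (n + 1) → V}
    (ht : ∀ i, t i ∈ T) (ht0 : t 0 ∈ R) {r : V} (hrT : r ∈ T) (hrR : r ∈ R) :
    pathValue b d t r ≤ b r := by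
  have := hb n (Fin.snoc t r) (snoc_mem ht hrT) (by rwa [Fin.snoc_apply_zero])
    (by rwa [Fin.snoc_last])
  rwa [Fin.snoc_apply_zero, Fin.snoc_last, pathSum_snoc, ← add_assoc] at this

lemma convex_setOf_bddAbove_pathValues : Convex ℝ {x | BddAbove (pathValues T R b d x)} := by
  rintro x ⟨Mx, hMx⟩ y ⟨My, hMy⟩ a c ha hc hac
  refine ⟨a * Mx + c * My, ?_⟩
  rintro _ ⟨n, t, ht, ht0, rfl⟩
  rw [pathValue_combo t x y hac]
  gcongr
  exacts [hMx ⟨n, t, ht, ht0, rfl⟩, hMy ⟨n, t, ht, ht0, rfl⟩]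

/-- Closing a path at `y ∈ T` through a prescribed point `r` bounds its values at the points of
`T`; the bound propagates to `convexHull ℝ T` because every path value is affine. -/
lemma PathConsistent.bddAbove_pathValues (hb : PathConsistent T R b d) {r : V} (hrT : r ∈ T)
    (hrR : r ∈ R) {x : V} (hx : x ∈ convexHull ℝ T) : BddAbove (pathValues T R b d x) := by
  refine convexHull_min (fun y hy => ?_) convex_setOf_bddAbove_pathValues hx
  refine ⟨b r - d y (r - y), ?_⟩
  rintro _ ⟨n, t, ht, ht0, rfl⟩
  have := hb.pathValue_le (snoc_mem ht hy) (by rwa [Fin.snoc_apply_zero]) hrT hrR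
  rw [pathValue_snoc] at this
  linarith

variable (hb : PathConsistent T R b d) (hR : R.Nonempty) (hRT : R ⊆ T)
include hb hR hRT

lemma PathConsistent.le_pathExtension {x : V} (hx : x ∈ convexHull ℝ T) {n : ℕ}
    {t : Fin (n + 1) → V} (ht : ∀ i, t i ∈ T) (ht0 : t 0 ∈ R) :
    pathValue b d t x ≤ pathExtension T R b d x := by
  obtain ⟨r, hr⟩ := hR
  exact le_csSup (hb.bddAbove_pathValues (hRT hr) hr hx) ⟨n, t, ht, ht0, rfl⟩

lemma PathConsistent.convexOn_pathExtension :
    ConvexOn ℝ (convexHull ℝ T) (pathExtension T R b d) := by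
  refine ⟨convex_convexHull ℝ T, fun x hx y hy a c ha hc hac => ?_⟩
  refine csSup_le (pathValues_nonempty hR hRT _) ?_
  rintro _ ⟨n, t, ht, ht0, rfl⟩
  rw [pathValue_combo t x y hac, smul_eq_mul, smul_eq_mul]
  gcongr
  exacts [hb.le_pathExtension hR hRT hx ht ht0, hb.le_pathExtension hR hRT hy ht ht0]

lemma PathConsistent.pathExtension_add_le {y : V} (hy : y ∈ T) {x : V} (hx : x ∈ convexHull ℝ T) :
    pathExtension T R b d y + d y (x - y) ≤ pathExtension T R b d x := by
  suffices pathExtension T R b d y ≤ pathExtension T R b d x - d y (x - y) by linarith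
  refine csSup_le (pathValues_nonempty hR hRT _) ?_
  rintro _ ⟨n, t, ht, ht0, rfl⟩
  have := hb.le_pathExtension hR hRT hx (snoc_mem ht hy) (by rwa [Fin.snoc_apply_zero])
  rw [pathValue_snoc] at this
  linarith

lemma PathConsistent.pathExtension_eq {r : V} (hr : r ∈ R) : pathExtension T R b d r = b r := by
  apply le_antisymm
  · refine csSup_le (pathValues_nonempty hR hRT _) ?_
    rintro _ ⟨n, t, ht, ht0, rfl⟩
    exact hb.pathValue_le ht ht0 (hRT hr) hr
  · have := hb.le_pathExtension hR hRT (subset_convexHull ℝ T (hRT hr))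
      (t := fun _ : Fin 1 => r) (fun _ => hRT hr) hr
    rwa [pathValue_const, sub_self, map_zero, add_zero] at this

end pathExtension

lemma pathConsistent_update [DecidableEq V] {T S : Set V} {G : V → ℝ} {d : V → V →ₗ[ℝ] ℝ}
    (hd : ∀ t ∈ T, ∀ x ∈ T, G t + d t (x - t) ≤ G x) {tstar : V} (htstar : tstar ∉ S) {c : ℝ}
    (hfrom : ∀ (k : ℕ) (t : Fin (k + 2) → V), (∀ i, t i ∈ T) → t 0 ∈ S →
      t (Fin.last (k + 1)) = tstar → G (t 0) + pathSum d t ≤ c)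
    (hto : ∀ (k : ℕ) (t : Fin (k + 2) → V), (∀ i, t i ∈ T) → t 0 = tstar →
      t (Fin.last (k + 1)) ∈ S → c ≤ G (t (Fin.last (k + 1))) - pathSum d t) :
    PathConsistent T (insert tstar S) (Function.update G tstar c) d := by
  intro k t ht h0 hlast
  have hG := add_pathSum_le hd t ht
  have hne {x : V} (hx : x ∈ S) : x ≠ tstar := ne_of_mem_of_not_mem hx htstar
  rcases h0 with h0 | h0 <;> rcases hlast with hlast | hlast
  · rw [h0, hlast] at hG ⊢
    rw [Function.update_self]
    linarith
  · rw [h0, Function.update_self, Function.update_of_ne (hne hlast)]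
    linarith [hto k t ht h0 hlast]
  · rw [hlast, Function.update_self, Function.update_of_ne (hne h0)]
    exact hfrom k t ht h0 hlast
  · rw [Function.update_of_ne (hne h0), Function.update_of_ne (hne hlast)]
    exact hG

end PathExtension

open PathExtension

theorem revenue_characterization_general {V : Type*} [AddCommGroup V] [Module ℝ V]
    (T : Set V)
    (G : V → ℝ)
    (d : V → (V →ₗ[ℝ] ℝ))
    (hd : ∀ t ∈ T, ∀ x ∈ convexHull ℝ T, G t + d t (x - t) ≤ G x)
    (S : Set V) (hST : S ⊆ T)
    (tstar : V) (htstar : tstar ∈ T \ S) (c : ℝ) :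
    (∃ G' : V → ℝ, ConvexOn ℝ (convexHull ℝ T) G' ∧
      (∀ t ∈ S, G' t = G t) ∧
      (∀ t ∈ T, ∀ x ∈ convexHull ℝ T, G' t + d t (x - t) ≤ G' x) ∧
      G' tstar = c) ↔
    ((∀ (k : ℕ) (t : Fin (k + 2) → V), (∀ i, t i ∈ T) → t 0 ∈ S →
        t (Fin.last (k + 1)) = tstar →
        G (t 0) + ∑ i : Fin (k + 1), d (t i.castSucc) (t i.succ - t i.castSucc) ≤ c) ∧
      (∀ (k : ℕ) (t : Fin (k + 2) → V), (∀ i, t i ∈ T) → t 0 = tstar →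
        t (Fin.last (k + 1)) ∈ S →
        c ≤ G (t (Fin.last (k + 1))) -
          ∑ i : Fin (k + 1), d (t i.castSucc) (t i.succ - t i.castSucc))) := by
  have onT {F : V → ℝ} (hF : ∀ t ∈ T, ∀ x ∈ convexHull ℝ T, F t + d t (x - t) ≤ F x) :
      ∀ t ∈ T, ∀ x ∈ T, F t + d t (x - t) ≤ F x :=
    fun t ht x hx => hF t ht x (subset_convexHull ℝ T hx)
  constructor
  · rintro ⟨G', -, hG'S, hG'd, rfl⟩
    refine ⟨fun k t ht h0 hlast => ?_, fun k t ht h0 hlast => ?_⟩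
    · have := add_pathSum_le (onT hG'd) t ht
      rwa [hG'S _ h0, hlast] at this
    · have := add_pathSum_le (onT hG'd) t ht
      rw [h0, hG'S _ hlast] at this
      exact le_sub_iff_add_le.2 this
  · rintro ⟨hfrom, hto⟩
    classical
    have hb := pathConsistent_update (onT hd) htstar.2 hfrom hto
    have hR : (insert tstar S).Nonempty := Set.insert_nonempty _ _
    have hRT : insert tstar S ⊆ T := Set.insert_subset htstar.1 hST
    refine ⟨pathExtension T _ _ d, hb.convexOn_pathExtension hR hRT, fun t ht => ?_,
      fun t ht x hx => hb.pathExtension_add_le hR hRT ht hx, ?_⟩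
    · rw [hb.pathExtension_eq hR hRT (Set.mem_insert_of_mem _ ht),
        Function.update_of_ne (ne_of_mem_of_not_mem ht htstar.2)]
    · rw [hb.pathExtension_eq hR hRT (Set.mem_insert _ _), Function.update_self]

/-- Payment characterization (extension of Kos–Messner): given a convex `G` on
`convexHull T` with selection of subgradients `{d_t}` on `T`, a nonempty `S ⊆ T`,
`t* ∈ T \ S` and `c ∈ ℝ`, there is a convex `G'` agreeing with `G` on `S`, having the
same selection of subgradients on `T`, and with `G'(t*) = c`, iff `c` lies between the
path bounds of condition (i) and (ii). -/
theorem revenue_characterization {V : Type*} [AddCommGroup V] [Module ℝ V]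
    (T : Set V) (hT : T.Nonempty)
    (G : V → ℝ) (hG : ConvexOn ℝ (convexHull ℝ T) G)
    (d : V → (V →ₗ[ℝ] ℝ))
    (hd : ∀ t ∈ T, ∀ x ∈ convexHull ℝ T, G t + d t (x - t) ≤ G x)
    (S : Set V) (hS : S.Nonempty) (hST : S ⊆ T)
    (tstar : V) (htstar : tstar ∈ T \ S) (c : ℝ) :
    (∃ G' : V → ℝ, ConvexOn ℝ (convexHull ℝ T) G' ∧
      (∀ t ∈ S, G' t = G t) ∧
      (∀ t ∈ T, ∀ x ∈ convexHull ℝ T, G' t + d t (x - t) ≤ G' x) ∧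
      G' tstar = c) ↔
    ((∀ (k : ℕ) (t : Fin (k + 2) → V), (∀ i, t i ∈ T) → t 0 ∈ S →
        t (Fin.last (k + 1)) = tstar →
        G (t 0) + ∑ i : Fin (k + 1), d (t i.castSucc) (t i.succ - t i.castSucc) ≤ c) ∧
      (∀ (k : ℕ) (t : Fin (k + 2) → V), (∀ i, t i ∈ T) → t 0 = tstar →
        t (Fin.last (k + 1)) ∈ S →
        c ≤ G (t (Fin.last (k + 1))) -
          ∑ i : Fin (k + 1), d (t i.castSucc) (t i.succ - t i.castSucc))) :=
  revenue_characterization_general T G d hd S hST tstar htstar c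
end

section
/- Let V be a real vector space and T ⊆ V a nonempty convex set. Let A, A' : T → (V → ℝ) be truthful affine scores whose linear parts coincide, i.e. for every t' ∈ T the linear part of A(t') equals the linear part of A'(t'). Then A and A' differ by a constant: there exists c ∈ ℝ with A(t')(t) = A'(t')(t) + c for all t, t' ∈ T. -/
/-!
Truthfulness says that `ℓ t'` is a subgradient at `t'` of the utility `t ↦ ℓ t t + c t`, so the
utilities of the two scores are convex functions with the same subgradients. Hence the
difference `f = c - c'` satisfies `|f t - f s| ≤ (ℓ t - ℓ s) (t - s)`. On a segment
`s + a • (t - s)` the right-hand side is `(b - a) (m b - m a)` for a real function `m`, and summing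
over a partition of `[0, 1]` into `n` equal pieces gives `|f t - f s| ≤ (m 1 - m 0) / n → 0`.
-/

open Finset

theorem abs_sub_le_div_of_abs_sub_le_mul_sub {φ m : ℝ → ℝ}
    (h : ∀ a b, 0 ≤ a → a ≤ b → b ≤ 1 → |φ b - φ a| ≤ (b - a) * (m b - m a))
    {n : ℕ} (hn : 0 < n) : |φ 1 - φ 0| ≤ (m 1 - m 0) / n := by
  have hn' : (n : ℝ) ≠ 0 := by positivity
  have telescope (g : ℝ → ℝ) :
      ∑ i ∈ range n, (g ((i + 1 : ℕ) / n) - g (i / n)) = g 1 - g 0 := by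
    rw [sum_range_sub (fun i : ℕ => g (i / n)), div_self hn', Nat.cast_zero, zero_div]
  calc |φ 1 - φ 0|
      = |∑ i ∈ range n, (φ ((i + 1 : ℕ) / n) - φ (i / n))| := by rw [telescope]
    _ ≤ ∑ i ∈ range n, |φ ((i + 1 : ℕ) / n) - φ (i / n)| := abs_sum_le_sum_abs _ _
    _ ≤ ∑ i ∈ range n, (1 / n : ℝ) * (m ((i + 1 : ℕ) / n) - m (i / n)) := by
        refine sum_le_sum fun i hi => ?_
        have hin : (i + 1 : ℕ) ≤ (n : ℝ) := by exact_mod_cast mem_range.mp hi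
        have hstep : ((i + 1 : ℕ) / n : ℝ) - i / n = 1 / n := by push_cast; field_simp; ring
        rw [← hstep]
        exact h _ _ (by positivity) (by gcongr; simp) (div_le_one_of_le₀ hin (Nat.cast_nonneg n))
    _ = (m 1 - m 0) / n := by rw [← mul_sum, telescope, one_div_mul_eq_div]

theorem eq_of_abs_sub_le_mul_sub {φ m : ℝ → ℝ}
    (h : ∀ a b, 0 ≤ a → a ≤ b → b ≤ 1 → |φ b - φ a| ≤ (b - a) * (m b - m a)) :
    φ 1 = φ 0 := by
  have hlim := tendsto_const_div_atTop_nhds_zero_nat (m 1 - m 0)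
  have hle : |φ 1 - φ 0| ≤ 0 :=
    ge_of_tendsto hlim <| Filter.eventually_atTop.2
      ⟨1, fun n hn => abs_sub_le_div_of_abs_sub_le_mul_sub h hn⟩
  exact sub_eq_zero.1 (abs_nonpos_iff.1 hle)

section Truthful

variable {V : Type*} [AddCommGroup V] [Module ℝ V]

def IsTruthful (T : Set V) (ℓ : V → V →ₗ[ℝ] ℝ) (c : V → ℝ) : Prop :=
  ∀ t ∈ T, ∀ t' ∈ T, ℓ t' t + c t' ≤ ℓ t t + c t

variable {T : Set V} {ℓ : V → V →ₗ[ℝ] ℝ} {c c' : V → ℝ}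

theorem IsTruthful.abs_sub_sub_le (hc : IsTruthful T ℓ c) (hc' : IsTruthful T ℓ c')
    {s t : V} (hs : s ∈ T) (ht : t ∈ T) :
    |(c t - c' t) - (c s - c' s)| ≤ (ℓ t - ℓ s) (t - s) := by
  have h₁ := hc t ht s hs
  have h₂ := hc s hs t ht
  have h₁' := hc' t ht s hs
  have h₂' := hc' s hs t ht
  simp only [LinearMap.sub_apply, map_sub]
  rw [abs_le]
  constructor <;> linarith

theorem IsTruthful.sub_eq_sub (hT : Convex ℝ T) (hc : IsTruthful T ℓ c)
    (hc' : IsTruthful T ℓ c') {s t : V} (hs : s ∈ T) (ht : t ∈ T) :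
    c t - c' t = c s - c' s := by
  let x : ℝ → V := fun a => s + a • (t - s)
  have hx : ∀ a b, x b - x a = (b - a) • (t - s) := fun a b => by simp only [x]; module
  have hmem : ∀ {a : ℝ}, 0 ≤ a → a ≤ 1 → x a ∈ T := fun h₀ h₁ =>
    hT.add_smul_sub_mem hs ht ⟨h₀, h₁⟩
  have key := eq_of_abs_sub_le_mul_sub (φ := fun a => c (x a) - c' (x a))
    (m := fun a => ℓ (x a) (t - s)) fun a b ha hab hb => by
      have := hc.abs_sub_sub_le hc' (hmem ha (hab.trans hb)) (hmem (ha.trans hab) hb)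
      rwa [hx, map_smul, LinearMap.sub_apply, smul_eq_mul] at this
  simpa [x] using key

end Truthful

theorem revenue_equivalence_general {V : Type*} [AddCommGroup V] [Module ℝ V]
    (T : Set V) (hTconv : Convex ℝ T)
    (A A' : V → V → ℝ) (ℓ : V → (V →ₗ[ℝ] ℝ)) (c c' : V → ℝ)
    (hA : ∀ t' ∈ T, ∀ x, A t' x = ℓ t' x + c t')
    (hA' : ∀ t' ∈ T, ∀ x, A' t' x = ℓ t' x + c' t')
    (htr : ∀ t ∈ T, ∀ t' ∈ T, A t' t ≤ A t t)
    (htr' : ∀ t ∈ T, ∀ t' ∈ T, A' t' t ≤ A' t t) :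
    ∃ k : ℝ, ∀ t ∈ T, ∀ t' ∈ T, A t' t = A' t' t + k := by
  have hc : IsTruthful T ℓ c := fun t ht t' ht' => by
    simpa only [hA t ht, hA t' ht'] using htr t ht t' ht'
  have hc' : IsTruthful T ℓ c' := fun t ht t' ht' => by
    simpa only [hA' t ht, hA' t' ht'] using htr' t ht t' ht'
  rcases T.eq_empty_or_nonempty with rfl | ⟨s, hs⟩
  · exact ⟨0, by simp⟩
  refine ⟨c s - c' s, fun t ht t' ht' => ?_⟩
  rw [hA t' ht', hA' t' ht', ← hc.sub_eq_sub hTconv hc' hs ht']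
  ring

/-- Revenue equivalence on a convex type space: two truthful affine scores whose linear
parts coincide differ by a constant. -/
theorem revenue_equivalence {V : Type*} [AddCommGroup V] [Module ℝ V]
    (T : Set V) (hT : T.Nonempty) (hTconv : Convex ℝ T)
    (A A' : V → V → ℝ) (ℓ : V → (V →ₗ[ℝ] ℝ)) (c c' : V → ℝ)
    (hA : ∀ t' ∈ T, ∀ x, A t' x = ℓ t' x + c t')
    (hA' : ∀ t' ∈ T, ∀ x, A' t' x = ℓ t' x + c' t')
    (htr : ∀ t ∈ T, ∀ t' ∈ T, A t' t ≤ A t t)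
    (htr' : ∀ t ∈ T, ∀ t' ∈ T, A' t' t ≤ A' t t) :
    ∃ k : ℝ, ∀ t ∈ T, ∀ t' ∈ T, A t' t = A' t' t + k :=
  revenue_equivalence_general T hTconv A A' ℓ c c' hA hA' htr htr'
end

section
/- Let V be a real vector space, T ⊆ V a nonempty convex set, and suppose the property Γ : T → Set R is elicited by some affine score S : R → (V → ℝ). Then every level set Γ_r = {t ∈ T : r ∈ Γ(t)} is a convex subset of V. -/
def IsAffineScore {V : Type*} [AddCommGroup V] [Module ℝ V] {R : Type*}
    (S : R → V → ℝ) : Prop :=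
  ∀ r : R, ∃ (ℓ : V →ₗ[ℝ] ℝ) (c : ℝ), ∀ x, S r x = ℓ x + c

def Elicits {V : Type*} [AddCommGroup V] [Module ℝ V] {R : Type*}
    (T : Set V) (S : R → V → ℝ) (Γ : V → Set R) : Prop :=
  ∀ t ∈ T, (∃ r : R, ∀ r' : R, S r' t ≤ S r t) ∧ Γ t = {r : R | ∀ r' : R, S r' t ≤ S r t}

/-! A level set `Γ_r` is `T` cut by the sets where `r` scores at least as well as each `r'`.
For an affine score these are half-spaces, so `Γ_r` is an intersection of convex sets. -/

section

variable {V : Type*} [AddCommGroup V] [Module ℝ V] {R : Type*} {S : R → V → ℝ}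

theorem IsAffineScore.convex_setOf_le (hS : IsAffineScore S) (r r' : R) :
    Convex ℝ {x | S r' x ≤ S r x} := by
  obtain ⟨ℓ, c, hr⟩ := hS r
  obtain ⟨ℓ', c', hr'⟩ := hS r'
  have halfSpace : {x | S r' x ≤ S r x} = {x | (ℓ' - ℓ) x ≤ c - c'} := by
    ext x
    simp only [Set.mem_ofPred_eq, hr, hr', LinearMap.sub_apply]
    constructor <;> intro h <;> linarith
  rw [halfSpace]
  exact convex_halfSpace_le (ℓ' - ℓ).isLinear _

theorem Elicits.setOf_mem_eq {T : Set V} {Γ : V → Set R} (hel : Elicits T S Γ) (r : R) :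
    {t ∈ T | r ∈ Γ t} = T ∩ ⋂ r', {x | S r' x ≤ S r x} := by
  ext t
  simp only [Set.mem_inter_iff, Set.mem_iInter, Set.mem_ofPred_eq]
  refine and_congr_right fun ht => ?_
  rw [(hel t ht).2, Set.mem_ofPred_eq]

end

theorem level_sets_convex_general {V : Type*} [AddCommGroup V] [Module ℝ V] {R : Type*}
    (T : Set V) (hTconv : Convex ℝ T)
    (Γ : V → Set R)
    (S : R → V → ℝ) (hS : IsAffineScore S) (hel : Elicits T S Γ) :
    ∀ r : R, Convex ℝ {t ∈ T | r ∈ Γ t} := by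
  intro r
  rw [hel.setOf_mem_eq r]
  exact hTconv.inter (convex_iInter fun r' => hS.convex_setOf_le r r')

/-- The level sets of an elicitable property on a convex type space are convex. -/
theorem level_sets_convex {V : Type*} [AddCommGroup V] [Module ℝ V] {R : Type*}
    (T : Set V) (hT : T.Nonempty) (hTconv : Convex ℝ T)
    (Γ : V → Set R) (hΓne : ∀ t ∈ T, (Γ t).Nonempty)
    (S : R → V → ℝ) (hS : IsAffineScore S) (hel : Elicits T S Γ) :
    ∀ r : R, Convex ℝ {t ∈ T | r ∈ Γ t} :=
  level_sets_convex_general T hTconv Γ S hS hel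
end

section
/- Let E be a real inner product space, n ≥ 1, and let Z₁, …, Z_n ⊆ E and p₁, …, p_n ∈ E. (a) If there exist weights w₁, …, w_n ∈ ℝ such that Zᵢ = {t ∈ E : ‖pᵢ − t‖² − wᵢ ≤ ‖pⱼ − t‖² − wⱼ for all j} for every i, then weak monotonicity holds: for all i, j and all t ∈ Zᵢ, t' ∈ Zⱼ, ⟨pᵢ, t' − t⟩ ≤ ⟨pⱼ, t' − t⟩. (b) Conversely, if weak monotonicity holds, then: (orthogonality) for all i, j and all t, t' ∈ Zᵢ ∩ Zⱼ, ⟨pᵢ − pⱼ, t' − t⟩ = 0; and (orientation) for all i, j with pᵢ ≠ pⱼ, all c ∈ ℝ, and all t ∈ Zᵢ, if t + c·(pⱼ − pᵢ) ∈ Zⱼ then c ≥ 0. -/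
/-!
Expanding the squares, `‖a - t‖² - ‖b - t‖²` is affine in `t` with linear part `-2⟪a - b, t⟫`.
Adding the defining inequality of `t ∈ Zᵢ` (tested against `j`) to that of `t' ∈ Zⱼ` (tested
against `i`) cancels the weights and leaves `⟪pᵢ - pⱼ, t' - t⟫ ≤ 0`, which is weak monotonicity.
Conversely, weak monotonicity applied in both directions to two points of `Zᵢ ∩ Zⱼ` gives
orthogonality, and applied to `t` and `t + c • (pⱼ - pᵢ)` it reads `-c ‖pⱼ - pᵢ‖² ≤ 0`.
-/

open scoped RealInnerProductSpace

section PowerDiagram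

variable {E ι : Type*} [NormedAddCommGroup E] [InnerProductSpace ℝ E]

theorem norm_sub_sq_sub_norm_sub_sq (a b t : E) :
    ‖a - t‖ ^ 2 - ‖b - t‖ ^ 2 = ‖a‖ ^ 2 - ‖b‖ ^ 2 - 2 * ⟪a - b, t⟫ := by
  rw [norm_sub_sq_real, norm_sub_sq_real, inner_sub_left]
  ring

def powerCell (p : ι → E) (w : ι → ℝ) (i : ι) : Set E :=
  {t | ∀ j, ‖p i - t‖ ^ 2 - w i ≤ ‖p j - t‖ ^ 2 - w j}

def WeakMonotone (Z : ι → Set E) (p : ι → E) : Prop :=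
  ∀ i j, ∀ t ∈ Z i, ∀ t' ∈ Z j, ⟪p i, t' - t⟫ ≤ ⟪p j, t' - t⟫

theorem weakMonotone_iff_inner_sub_nonpos {Z : ι → Set E} {p : ι → E} :
    WeakMonotone Z p ↔ ∀ i j, ∀ t ∈ Z i, ∀ t' ∈ Z j, ⟪p i - p j, t' - t⟫ ≤ 0 := by
  simp only [WeakMonotone, inner_sub_left, sub_nonpos]

theorem weakMonotone_powerCell (p : ι → E) (w : ι → ℝ) : WeakMonotone (powerCell p w) p := by
  refine weakMonotone_iff_inner_sub_nonpos.2 fun i j t ht t' ht' => ?_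
  have hsum : ‖p i - t‖ ^ 2 - ‖p j - t‖ ^ 2 ≤ ‖p i - t'‖ ^ 2 - ‖p j - t'‖ ^ 2 := by
    linarith [ht j, ht' i]
  rw [norm_sub_sq_sub_norm_sub_sq, norm_sub_sq_sub_norm_sub_sq] at hsum
  rw [inner_sub_right]
  linarith

namespace WeakMonotone

variable {Z : ι → Set E} {p : ι → E}

theorem inner_sub_eq_zero (h : WeakMonotone Z p) {i j : ι} {t t' : E}
    (ht : t ∈ Z i ∩ Z j) (ht' : t' ∈ Z i ∩ Z j) : ⟪p i - p j, t' - t⟫ = 0 := by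
  have hij := weakMonotone_iff_inner_sub_nonpos.1 h i j t ht.1 t' ht'.2
  have hji := weakMonotone_iff_inner_sub_nonpos.1 h j i t ht.2 t' ht'.1
  rw [← neg_sub (p i), inner_neg_left] at hji
  linarith

theorem nonneg_of_add_smul_mem (h : WeakMonotone Z p) {i j : ι} (hp : p i ≠ p j) {c : ℝ}
    {t : E} (ht : t ∈ Z i) (hct : t + c • (p j - p i) ∈ Z j) : 0 ≤ c := by
  have hle := weakMonotone_iff_inner_sub_nonpos.1 h i j t ht _ hct
  have hpos : 0 < ‖p j - p i‖ ^ 2 := by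
    have := norm_pos_iff.2 (sub_ne_zero.2 hp.symm)
    positivity
  have hinner : ⟪p i - p j, t + c • (p j - p i) - t⟫ = -(c * ‖p j - p i‖ ^ 2) := by
    rw [add_sub_cancel_left, inner_smul_right, ← neg_sub (p j), inner_neg_left,
      real_inner_self_eq_norm_sq, mul_neg]
  rw [hinner, neg_nonpos] at hle
  exact nonneg_of_mul_nonneg_left hle hpos

end WeakMonotone

end PowerDiagram

theorem power_diagram_wmon_general {E : Type*} [NormedAddCommGroup E] [InnerProductSpace ℝ E]
    (n : ℕ) (Z : Fin n → Set E) (p : Fin n → E) :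
    ((∃ w : Fin n → ℝ, ∀ i : Fin n,
        Z i = {t : E | ∀ j : Fin n, ‖p i - t‖ ^ 2 - w i ≤ ‖p j - t‖ ^ 2 - w j}) →
      ∀ i j : Fin n, ∀ t ∈ Z i, ∀ t' ∈ Z j, ⟪p i, t' - t⟫ ≤ ⟪p j, t' - t⟫) ∧
    ((∀ i j : Fin n, ∀ t ∈ Z i, ∀ t' ∈ Z j, ⟪p i, t' - t⟫ ≤ ⟪p j, t' - t⟫) →
      ((∀ i j : Fin n, ∀ t ∈ Z i ∩ Z j, ∀ t' ∈ Z i ∩ Z j, ⟪p i - p j, t' - t⟫ = (0:ℝ)) ∧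
        (∀ i j : Fin n, p i ≠ p j → ∀ c : ℝ, ∀ t ∈ Z i,
          t + c • (p j - p i) ∈ Z j → 0 ≤ c))) := by
  refine ⟨?_, fun hmon => ⟨?_, ?_⟩⟩
  · rintro ⟨w, hw⟩
    obtain rfl : Z = powerCell p w := funext hw
    exact weakMonotone_powerCell p w
  · exact fun i j t ht t' ht' => WeakMonotone.inner_sub_eq_zero hmon ht ht'
  · exact fun i j hp c t ht hct => WeakMonotone.nonneg_of_add_smul_mem hmon hp ht hct

/-- (a) Power diagram cells satisfy weak monotonicity; (b) conversely, weak
monotonicity implies Aurenhammer's orthogonality and orientation conditions. -/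
theorem power_diagram_wmon {E : Type*} [NormedAddCommGroup E] [InnerProductSpace ℝ E]
    (n : ℕ) (hn : 1 ≤ n) (Z : Fin n → Set E) (p : Fin n → E) :
    ((∃ w : Fin n → ℝ, ∀ i : Fin n,
        Z i = {t : E | ∀ j : Fin n, ‖p i - t‖ ^ 2 - w i ≤ ‖p j - t‖ ^ 2 - w j}) →
      ∀ i j : Fin n, ∀ t ∈ Z i, ∀ t' ∈ Z j, ⟪p i, t' - t⟫ ≤ ⟪p j, t' - t⟫) ∧
    ((∀ i j : Fin n, ∀ t ∈ Z i, ∀ t' ∈ Z j, ⟪p i, t' - t⟫ ≤ ⟪p j, t' - t⟫) →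
      ((∀ i j : Fin n, ∀ t ∈ Z i ∩ Z j, ∀ t' ∈ Z i ∩ Z j, ⟪p i - p j, t' - t⟫ = (0:ℝ)) ∧
        (∀ i j : Fin n, p i ≠ p j → ∀ c : ℝ, ∀ t ∈ Z i,
          t + c • (p j - p i) ∈ Z j → 0 ≤ c))) :=
  power_diagram_wmon_general n Z p
end
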